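/- arXiv:2308.16410 — 10 statements merged into one kernel-verified Lean document; each statement's English description precedes it below -/
import Mathlib

section
/- Let S be a Noetherian domain with quotient field K, let 𝔞_• and 𝔟_• be graded families of nonzero ideals in S, and let v be a valuation of K supported on S such that v̂(𝔟_•) > 0. Then v̂(𝔟_•)/v̂(𝔞_•) ≤ ρ̂(𝔞_•, 𝔟̄_•). Moreover, if v̂(𝔞_•) = 0, then ρ̂(𝔞_•, 𝔟̄_•) = ∞. -/
open Filter Polynomial
open scoped ENNReal NNReal

set_option synthInstance.maxHeartbeats 1000000
set_option maxHeartbeats 1000000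

universe u

section Preamble

variable {S : Type u} [CommRing S]

/-- A graded family of ideals: `a 0 = S` and `a p * a q ⊆ a (p + q)` for all `p, q`. -/
def GradedFamily (a : ℕ → Ideal S) : Prop :=
  a 0 = ⊤ ∧ ∀ p q : ℕ, a p * a q ≤ a (p + q)

/-- A filtration of ideals: a graded family which is descending. -/
def IdealFiltration (a : ℕ → Ideal S) : Prop :=
  GradedFamily a ∧ ∀ p : ℕ, a (p + 1) ≤ a p

/-- The integral closure of an ideal `I`: the ideal of all elements `x` satisfying an
equation of integral dependence `x ^ n + c 1 * x ^ (n - 1) + ⋯ + c n = 0` with `c i ∈ I ^ i`. -/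
noncomputable def intClosure (I : Ideal S) : Ideal S :=
  Ideal.span {x : S | ∃ n : ℕ, 0 < n ∧ ∃ c : ℕ → S,
    (∀ i, 1 ≤ i → i ≤ n → c i ∈ I ^ i) ∧
    x ^ n + ∑ i ∈ Finset.Icc 1 n, c i * x ^ (n - i) = 0}

/-- The resurgence `ρ(a, b) = sup { s / r : ¬ a s ⊆ b r }` (as an extended real number,
with `sSup ∅ = ⊥`). -/
noncomputable def resurgence (a b : ℕ → Ideal S) : EReal :=
  sSup {x : EReal | ∃ s r : ℕ, 0 < s ∧ 0 < r ∧ ¬ a s ≤ b r ∧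
    x = (((s : ℝ) / (r : ℝ) : ℝ) : EReal)}

/-- The asymptotic resurgence `ρ̂(a, b) = sup { s / r : ¬ a (s*t) ⊆ b (r*t) for all t ≫ 1}`. -/
noncomputable def asympResurgence (a b : ℕ → Ideal S) : EReal :=
  sSup {x : EReal | ∃ s r : ℕ, 0 < s ∧ 0 < r ∧
    (∀ᶠ t : ℕ in atTop, ¬ a (s * t) ≤ b (r * t)) ∧
    x = (((s : ℝ) / (r : ℝ) : ℝ) : EReal)}

/-- The `k`-th Veronese subalgebra of the Rees algebra of the graded family `b` is a
standard graded `S`-algebra, i.e. `b (k*n) = (b k) ^ n` for all `n ≥ 1`. -/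
def StdVeronese (b : ℕ → Ideal S) (k : ℕ) : Prop :=
  ∀ n : ℕ, 1 ≤ n → b (k * n) = b k ^ n

/-- The Rees algebra `ℛ(b) = ⊕ₙ bₙ tⁿ ⊆ S[t]` of a graded family, as a set of polynomials. -/
def ReesSet (b : ℕ → Ideal S) : Set (Polynomial S) :=
  {p : Polynomial S | ∀ n : ℕ, p.coeff n ∈ b n}

/-- `ℛ(b')` is a finitely generated `ℛ(b)`-module: there is a finite set `G ⊆ ℛ(b')`
such that every element of `ℛ(b')` is an `ℛ(b)`-linear combination of elements of `G`. -/
def ReesFGModule (b b' : ℕ → Ideal S) : Prop :=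
  ∃ G : Finset (Polynomial S), (G : Set (Polynomial S)) ⊆ ReesSet b' ∧
    ∀ p ∈ ReesSet b', ∃ c : Polynomial S → Polynomial S,
      (∀ g ∈ G, c g ∈ ReesSet b) ∧ p = ∑ g ∈ G, c g * g

/-- A graded family `b` is `bb`-equivalent (for an ideal `bb`) if for some `k`,
`b (i + k) ⊆ bb ^ i ⊆ b i` for all `i ≥ 1`. -/
def BEquivalent (bb : Ideal S) (b : ℕ → Ideal S) : Prop :=
  ∃ k : ℕ, ∀ i : ℕ, 1 ≤ i → b (i + k) ≤ bb ^ i ∧ bb ^ i ≤ b i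

/-- `β_n(a, b) = inf { d ≥ 1 : ¬ a n ⊆ b d }`, with `inf ∅ = ∞`. -/
noncomputable def betaIdx (a b : ℕ → Ideal S) (n : ℕ) : ℕ∞ :=
  sInf {d : ℕ∞ | ∃ m : ℕ, 0 < m ∧ ¬ a n ≤ b m ∧ d = (m : ℕ∞)}

/-- `ρ^n(a, b) = sup { s / β_s(a, b) : s ≥ n, β_s(a, b) < ∞ }`. -/
noncomputable def rhoN (a b : ℕ → Ideal S) (n : ℕ) : EReal :=
  sSup {x : EReal | ∃ s d : ℕ, n ≤ s ∧ 0 < s ∧ betaIdx a b s = (d : ℕ∞) ∧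
    x = (((s : ℝ) / (d : ℝ) : ℝ) : EReal)}

/-- `ρ^lim(a, b) = lim_{n → ∞} ρ^n(a, b)`, the limit of the nonincreasing sequence `ρ^n`,
i.e. its infimum. -/
noncomputable def rhoLim (a b : ℕ → Ideal S) : EReal :=
  ⨅ n : ℕ, rhoN a b n

end Preamble

section Valuations

variable {S : Type u} [CommRing S] [IsDomain S]

/-- A (discrete) valuation of the quotient field `K` of `S`: a function `v : K → ℤ` with
`v (x * y) = v x + v y` and `v (x + y) ≥ min (v x) (v y)` (for nonzero elements). -/
structure ValuationOn (S : Type u) [CommRing S] [IsDomain S] where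
  v : FractionRing S → ℤ
  map_mul : ∀ x y : FractionRing S, x ≠ 0 → y ≠ 0 → v (x * y) = v x + v y
  min_le_map_add : ∀ x y : FractionRing S, x ≠ 0 → y ≠ 0 → x + y ≠ 0 →
    min (v x) (v y) ≤ v (x + y)

/-- A valuation of the quotient field is supported on `S` if it is nonnegative on `S`. -/
def ValuationOn.Supported (w : ValuationOn S) : Prop :=
  ∀ x : S, x ≠ 0 → 0 ≤ w.v (algebraMap S (FractionRing S) x)

/-- `v(I) = min { v x : x ∈ I, x ≠ 0 }`. -/
noncomputable def idealVal (w : ValuationOn S) (I : Ideal S) : ℤ :=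
  sInf {m : ℤ | ∃ x ∈ I, x ≠ 0 ∧ w.v (algebraMap S (FractionRing S) x) = m}

/-- The skew Waldschmidt constant `v̂(a) = inf_{n ≥ 1} v(a n) / n (= lim_{n → ∞} v(a n)/n)`. -/
noncomputable def skewWald (w : ValuationOn S) (a : ℕ → Ideal S) : ℝ :=
  sInf {t : ℝ | ∃ n : ℕ, 0 < n ∧ t = (idealVal w (a n) : ℝ) / (n : ℝ)}

/-- `β_n^v(a, b) = inf { d ≥ 1 : v(a n) < v(b d) }`, with `inf ∅ = ∞`. -/
noncomputable def betaVal (w : ValuationOn S) (a b : ℕ → Ideal S) (n : ℕ) : ℕ∞ :=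
  sInf {d : ℕ∞ | ∃ m : ℕ, 0 < m ∧ idealVal w (a n) < idealVal w (b m) ∧ d = (m : ℕ∞)}

end Valuations

section Domains

/-- `S` is a finitely generated algebra over a field. -/
structure FieldBase (S : Type u) [CommRing S] where
  F : Type u
  [fld : Field F]
  [alg : Algebra F S]
  fg : Algebra.FiniteType F S

/-- `S` is finitely generated over a Noetherian integrally closed domain `R` with the
property that every finitely generated `R`-algebra (domain) has module-finite integral
closure (in its fraction field). -/
structure NagataBase (S : Type u) [CommRing S] where
  R : Type u
  [cring : CommRing R]
  [dom : IsDomain R]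
  [noeth : IsNoetherianRing R]
  [intClosed : IsIntegrallyClosed R]
  [alg : Algebra R S]
  fg : Algebra.FiniteType R S
  finiteIntegralClosure : ∀ (A : Type u) [CommRing A] [IsDomain A] [Algebra R A],
    Algebra.FiniteType R A → Module.Finite A (integralClosure A (FractionRing A))

/-- `S` is a complete local Noetherian ring, or finitely generated over a field or over `ℤ`,
or, more generally, finitely generated over a Noetherian integrally closed domain `R` such
that every finitely generated `R`-algebra has a module-finite integral closure. -/
def AdmissibleDomain (S : Type u) [CommRing S] : Prop :=
  (IsNoetherianRing S ∧ ∃ m : Ideal S, m.IsMaximal ∧ (∀ I : Ideal S, I.IsMaximal → I = m) ∧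
    IsAdicComplete m S)
  ∨ Nonempty (FieldBase S) ∨ Algebra.FiniteType ℤ S ∨ Nonempty (NagataBase S)

end Domains

/-!
If `a (s t) ⊆ b̄ (r t)`, then every nonzero element of `a (s t)` is integral over `b (r t)`, and
an equation of integral dependence forces `v(b (r t)) ≤ v(a (s t))`. Since `n ↦ v(a n)` is
subadditive, Fekete's lemma gives `v(a (s t)) / t → s v̂(a)`, while `v(b (r t)) / t ≥ r v̂(b)` for
every `t`. Hence `s v̂(a) < r v̂(b)` rules out the containment for all large `t`, so every positive
rational `s / r < v̂(b) / v̂(a)` (every one at all, if `v̂(a) = 0`) bounds `ρ̂(a, b̄)` from below.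
-/

open Topology

namespace ValuationOn

variable {S : Type u} [CommRing S] [IsDomain S] (w : ValuationOn S)

noncomputable def onRing (x : S) : ℤ :=
  w.v (algebraMap S (FractionRing S) x)

lemma Supported.onRing_nonneg {w : ValuationOn S} (hw : w.Supported) {x : S} (hx : x ≠ 0) :
    0 ≤ w.onRing x :=
  hw x hx

omit [IsDomain S] in
lemma algebraMap_ne_zero {x : S} (hx : x ≠ 0) : algebraMap S (FractionRing S) x ≠ 0 :=
  (map_ne_zero_iff _ (IsFractionRing.injective S (FractionRing S))).2 hx

lemma onRing_mul {x y : S} (hx : x ≠ 0) (hy : y ≠ 0) :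
    w.onRing (x * y) = w.onRing x + w.onRing y := by
  rw [onRing, _root_.map_mul]
  exact w.map_mul _ _ (algebraMap_ne_zero hx) (algebraMap_ne_zero hy)

lemma onRing_one : w.onRing 1 = 0 := by
  have h := w.onRing_mul (one_ne_zero (α := S)) one_ne_zero
  rw [one_mul] at h
  omega

lemma onRing_neg {x : S} (hx : x ≠ 0) : w.onRing (-x) = w.onRing x := by
  have h1 := w.onRing_mul (neg_ne_zero.2 (one_ne_zero (α := S))) (neg_ne_zero.2 one_ne_zero)
  have h2 := w.onRing_mul (neg_ne_zero.2 (one_ne_zero (α := S))) hx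
  rw [neg_one_mul, neg_neg, onRing_one] at h1
  rw [neg_one_mul] at h2
  omega

lemma onRing_pow {x : S} (hx : x ≠ 0) (n : ℕ) : w.onRing (x ^ n) = n * w.onRing x := by
  induction n with
  | zero => simpa using w.onRing_one
  | succ n ih =>
    rw [pow_succ, w.onRing_mul (pow_ne_zero n hx) hx, ih]
    push_cast
    ring

lemma le_onRing_add {x y : S} {c : ℤ} (hx : x ≠ 0 → c ≤ w.onRing x)
    (hy : y ≠ 0 → c ≤ w.onRing y) (hxy : x + y ≠ 0) : c ≤ w.onRing (x + y) := by
  by_cases hx0 : x = 0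
  · simpa [hx0] using hy (by simpa [hx0] using hxy)
  by_cases hy0 : y = 0
  · simpa [hy0] using hx (by simpa [hy0] using hxy)
  refine (le_min (hx hx0) (hy hy0)).trans ?_
  unfold onRing
  rw [_root_.map_add]
  exact w.min_le_map_add _ _ (algebraMap_ne_zero hx0) (algebraMap_ne_zero hy0)
    (by rw [← _root_.map_add]; exact algebraMap_ne_zero hxy)

lemma le_onRing_sum {ι : Type*} {c : ℤ} (s : Finset ι) (f : ι → S)
    (hf : ∀ i ∈ s, f i ≠ 0 → c ≤ w.onRing (f i)) (hs : ∑ i ∈ s, f i ≠ 0) :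
    c ≤ w.onRing (∑ i ∈ s, f i) := by
  induction s using Finset.cons_induction with
  | empty => simp at hs
  | cons i s hi ih =>
    rw [Finset.sum_cons] at hs ⊢
    exact w.le_onRing_add (hf i (Finset.mem_cons_self i s))
      (ih fun j hj => hf j (Finset.mem_cons_of_mem hj)) hs

end ValuationOn

section IdealVal

variable {S : Type u} [CommRing S] [IsDomain S] {w : ValuationOn S}

lemma bddBelow_onRing_of_mem (hw : w.Supported) (I : Ideal S) :
    BddBelow {m : ℤ | ∃ x ∈ I, x ≠ 0 ∧ w.onRing x = m} :=
  ⟨0, fun _ ⟨_, _, hx0, hxm⟩ => hxm ▸ hw.onRing_nonneg hx0⟩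

lemma idealVal_le (hw : w.Supported) {I : Ideal S} {x : S} (hxI : x ∈ I) (hx0 : x ≠ 0) :
    idealVal w I ≤ w.onRing x :=
  csInf_le (bddBelow_onRing_of_mem hw I) ⟨x, hxI, hx0, rfl⟩

lemma idealVal_nonneg (hw : w.Supported) (I : Ideal S) : 0 ≤ idealVal w I := by
  rcases Set.eq_empty_or_nonempty {m : ℤ | ∃ x ∈ I, x ≠ 0 ∧ w.onRing x = m} with h | h
  · exact (congrArg sInf h).trans Int.csInf_empty |>.ge
  · exact le_csInf h fun _ ⟨x, _, hx0, hxm⟩ => hxm ▸ hw.onRing_nonneg hx0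

lemma exists_onRing_eq_idealVal (hw : w.Supported) {I : Ideal S} (hI : I ≠ ⊥) :
    ∃ x ∈ I, x ≠ 0 ∧ w.onRing x = idealVal w I := by
  obtain ⟨x, hxI, hx0⟩ := Submodule.exists_mem_ne_zero_of_ne_bot hI
  exact Int.csInf_mem (s := {m : ℤ | ∃ x ∈ I, x ≠ 0 ∧ w.onRing x = m}) ⟨_, x, hxI, hx0, rfl⟩
    (bddBelow_onRing_of_mem hw I)

lemma idealVal_le_add_of_mul_le (hw : w.Supported) {I J K : Ideal S} (hI : I ≠ ⊥) (hJ : J ≠ ⊥)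
    (hIJ : I * J ≤ K) : idealVal w K ≤ idealVal w I + idealVal w J := by
  obtain ⟨x, hxI, hx0, hx⟩ := exists_onRing_eq_idealVal hw hI
  obtain ⟨y, hyJ, hy0, hy⟩ := exists_onRing_eq_idealVal hw hJ
  rw [← hx, ← hy, ← w.onRing_mul hx0 hy0]
  exact idealVal_le hw (hIJ (Ideal.mul_mem_mul hxI hyJ)) (mul_ne_zero hx0 hy0)

lemma mul_idealVal_le_of_mem_pow (hw : w.Supported) (I : Ideal S) (i : ℕ) :
    ∀ y ∈ I ^ i, y ≠ 0 → i * idealVal w I ≤ w.onRing y := by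
  induction i with
  | zero => intro y _ hy; simpa using hw.onRing_nonneg hy
  | succ i ih =>
    intro y hy
    rw [pow_succ] at hy
    refine Submodule.mul_induction_on hy (fun m hm n hn hmn => ?_)
      (fun x y hx hy hxy => w.le_onRing_add hx hy hxy)
    rw [w.onRing_mul (left_ne_zero_of_mul hmn) (right_ne_zero_of_mul hmn)]
    have hm' := ih m hm (left_ne_zero_of_mul hmn)
    have hn' := idealVal_le hw hn (right_ne_zero_of_mul hmn)
    push_cast
    linarith

-- If `v x < v(I)`, every term of the sum has value `> n v x = v(x ^ n)`.
lemma idealVal_le_of_integral_dependence (hw : w.Supported) {I : Ideal S} {x : S} (hx0 : x ≠ 0)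
    {n : ℕ} {c : ℕ → S} (hc : ∀ i, 1 ≤ i → i ≤ n → c i ∈ I ^ i)
    (heq : x ^ n + ∑ i ∈ Finset.Icc 1 n, c i * x ^ (n - i) = 0) :
    idealVal w I ≤ w.onRing x := by
  by_contra! hlt
  have hterm : ∀ i ∈ Finset.Icc 1 n, c i * x ^ (n - i) ≠ 0 →
      n * w.onRing x + 1 ≤ w.onRing (c i * x ^ (n - i)) := by
    intro i hi hne
    obtain ⟨hi1, hin⟩ := Finset.mem_Icc.1 hi
    rw [w.onRing_mul (left_ne_zero_of_mul hne) (pow_ne_zero _ hx0), w.onRing_pow hx0,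
      Nat.cast_sub hin]
    have hci := mul_idealVal_le_of_mem_pow hw I i (c i) (hc i hi1 hin) (left_ne_zero_of_mul hne)
    have hi1' : (1 : ℤ) ≤ i := by exact_mod_cast hi1
    nlinarith
  have hsum : ∑ i ∈ Finset.Icc 1 n, c i * x ^ (n - i) = -x ^ n := by
    linear_combination heq
  have hbound := w.le_onRing_sum _ _ hterm (by rw [hsum]; exact neg_ne_zero.2 (pow_ne_zero n hx0))
  rw [hsum, w.onRing_neg (pow_ne_zero n hx0), w.onRing_pow hx0] at hbound
  omega

lemma idealVal_le_of_mem_intClosure (hw : w.Supported) {I : Ideal S} {x : S}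
    (hx : x ∈ intClosure I) (hx0 : x ≠ 0) : idealVal w I ≤ w.onRing x := by
  induction hx using Submodule.span_induction with
  | mem x hmem =>
    obtain ⟨n, -, c, hc, heq⟩ := hmem
    exact idealVal_le_of_integral_dependence hw hx0 hc heq
  | zero => exact absurd rfl hx0
  | add x y _ _ ihx ihy => exact w.le_onRing_add ihx ihy hx0
  | smul r x _ ihx =>
    rw [smul_eq_mul, w.onRing_mul (left_ne_zero_of_mul hx0) (right_ne_zero_of_mul hx0)]
    linarith [hw.onRing_nonneg (left_ne_zero_of_mul hx0), ihx (right_ne_zero_of_mul hx0)]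

lemma idealVal_le_of_le_intClosure (hw : w.Supported) {I J : Ideal S} (hJ : J ≠ ⊥)
    (hJI : J ≤ intClosure I) : idealVal w I ≤ idealVal w J := by
  obtain ⟨x, hxJ, hx0, hx⟩ := exists_onRing_eq_idealVal hw hJ
  exact hx ▸ idealVal_le_of_mem_intClosure hw (hJI hxJ) hx0

end IdealVal

section SkewWald

variable {S : Type u} [CommRing S] [IsDomain S] {w : ValuationOn S} {a : ℕ → Ideal S}

lemma GradedFamily.ne_bot (ha : GradedFamily a) (hanz : ∀ i : ℕ, 1 ≤ i → a i ≠ ⊥) (n : ℕ) :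
    a n ≠ ⊥ := by
  rcases Nat.eq_zero_or_pos n with rfl | hn
  · exact ha.1 ▸ top_ne_bot
  · exact hanz n hn

lemma subadditive_idealVal (hw : w.Supported) (ha : GradedFamily a)
    (hanz : ∀ i : ℕ, 1 ≤ i → a i ≠ ⊥) : Subadditive fun n => (idealVal w (a n) : ℝ) := by
  intro m n
  dsimp only
  exact_mod_cast idealVal_le_add_of_mul_le hw (ha.ne_bot hanz m) (ha.ne_bot hanz n) (ha.2 m n)

lemma idealVal_div_nonneg (hw : w.Supported) (I : Ideal S) (n : ℕ) :
    0 ≤ (idealVal w I : ℝ) / n :=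
  div_nonneg (by exact_mod_cast idealVal_nonneg hw I) n.cast_nonneg

lemma bddBelow_idealVal_div (hw : w.Supported) :
    BddBelow (Set.range fun n : ℕ => (idealVal w (a n) : ℝ) / n) :=
  ⟨0, Set.forall_mem_range.2 fun n => idealVal_div_nonneg hw (a n) n⟩

lemma skewWald_nonneg (hw : w.Supported) (a : ℕ → Ideal S) : 0 ≤ skewWald w a :=
  Real.sInf_nonneg fun _ ⟨n, _, hx⟩ => hx ▸ idealVal_div_nonneg hw (a n) n

lemma skewWald_le_idealVal_div (hw : w.Supported) {n : ℕ} (hn : 0 < n) :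
    skewWald w a ≤ idealVal w (a n) / n := by
  refine csInf_le ⟨0, ?_⟩ ⟨n, hn, rfl⟩
  rintro _ ⟨m, -, rfl⟩
  exact idealVal_div_nonneg hw (a m) m

lemma skewWald_eq_lim (hw : w.Supported) (ha : GradedFamily a)
    (hanz : ∀ i : ℕ, 1 ≤ i → a i ≠ ⊥) : skewWald w a = (subadditive_idealVal hw ha hanz).lim := by
  rw [Subadditive.lim, skewWald]
  congr 1
  ext t
  exact ⟨fun ⟨n, hn, ht⟩ => ⟨n, hn, ht.symm⟩, fun ⟨n, hn, ht⟩ => ⟨n, hn, ht.symm⟩⟩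

lemma tendsto_idealVal_div_skewWald (hw : w.Supported) (ha : GradedFamily a)
    (hanz : ∀ i : ℕ, 1 ≤ i → a i ≠ ⊥) :
    Tendsto (fun n : ℕ => (idealVal w (a n) : ℝ) / n) atTop (𝓝 (skewWald w a)) := by
  rw [skewWald_eq_lim hw ha hanz]
  exact (subadditive_idealVal hw ha hanz).tendsto_lim (bddBelow_idealVal_div hw)

lemma eventually_not_le_intClosure (hw : w.Supported) (ha : GradedFamily a)
    (hanz : ∀ i : ℕ, 1 ≤ i → a i ≠ ⊥) (b : ℕ → Ideal S) {s r : ℕ} (hs : 0 < s) (hr : 0 < r)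
    (hlt : s * skewWald w a < r * skewWald w b) :
    ∀ᶠ t : ℕ in atTop, ¬ a (s * t) ≤ intClosure (b (r * t)) := by
  have hlim : Tendsto (fun t : ℕ => (idealVal w (a (s * t)) : ℝ) / t) atTop
      (𝓝 (s * skewWald w a)) := by
    refine (((tendsto_idealVal_div_skewWald hw ha hanz).comp
      (tendsto_id.const_mul_atTop' hs)).const_mul (s : ℝ)).congr' ?_
    filter_upwards [eventually_gt_atTop 0] with t ht
    simp only [Function.comp_apply, id, Nat.cast_mul]
    field_simp
  filter_upwards [hlim.eventually_lt_const hlt, eventually_gt_atTop 0] with t hsmall ht hle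
  have ht' : (0 : ℝ) < t := by exact_mod_cast ht
  have hb : r * skewWald w b ≤ idealVal w (b (r * t)) / t := by
    have h := skewWald_le_idealVal_div (a := b) hw (Nat.mul_pos hr ht)
    rw [Nat.cast_mul, le_div_iff₀ (by positivity)] at h
    rw [le_div_iff₀ ht']
    linarith
  have hval : (idealVal w (b (r * t)) : ℝ) ≤ idealVal w (a (s * t)) := by
    exact_mod_cast idealVal_le_of_le_intClosure hw (ha.ne_bot hanz _) hle
  have := div_le_div_of_nonneg_right hval ht'.le
  linarith

end SkewWald

variable {S : Type u} [CommRing S] in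
lemma coe_le_asympResurgence {a b : ℕ → Ideal S} {x : ℝ} (hx : 0 < x)
    (h : ∀ s r : ℕ, 0 < s → 0 < r → (s : ℝ) / r < x →
      ∀ᶠ t : ℕ in atTop, ¬ a (s * t) ≤ b (r * t)) :
    (x : EReal) ≤ asympResurgence a b := by
  refine le_of_forall_lt fun y hy => ?_
  obtain ⟨q, hyq, hqx⟩ := EReal.exists_rat_btwn_of_lt (max_lt hy (EReal.coe_lt_coe_iff.2 hx))
  have hq : (0 : ℝ) < q := EReal.coe_lt_coe_iff.1 ((le_max_right _ _).trans_lt hyq)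
  have hnum : 0 < q.num := Rat.num_pos.2 (by exact_mod_cast hq)
  have hsr : (q.num.natAbs : ℝ) / q.den = q := by
    rw [Rat.cast_def, Nat.cast_natAbs, abs_of_pos (by exact_mod_cast hnum)]
  refine ((le_max_left _ _).trans_lt hyq).trans_le (le_sSup ⟨_, _, Int.natAbs_pos.2 hnum.ne',
    q.pos, h _ _ (Int.natAbs_pos.2 hnum.ne') q.pos ?_, by rw [hsr]⟩)
  rw [hsr]
  exact EReal.coe_lt_coe_iff.1 hqx

theorem statement0_general {S : Type u} [CommRing S] [IsDomain S]
    (a b : ℕ → Ideal S) (ha : GradedFamily a)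
    (hanz : ∀ i : ℕ, 1 ≤ i → a i ≠ ⊥)
    (w : ValuationOn S) (hw : w.Supported) (hwb : 0 < skewWald w b) :
    (((skewWald w b / skewWald w a : ℝ)) : EReal) ≤
        asympResurgence a (fun i => intClosure (b i)) ∧
      (skewWald w a = 0 → asympResurgence a (fun i => intClosure (b i)) = ⊤) := by
  have htop : skewWald w a = 0 → asympResurgence a (fun i => intClosure (b i)) = ⊤ := by
    intro ha0
    refine (EReal.eq_top_iff_forall_lt _).2 fun y => ?_
    have hy : 0 < max y 0 + 1 := add_pos_of_nonneg_of_pos (le_max_right y 0) one_pos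
    refine (EReal.coe_lt_coe_iff.2 ((le_max_left y 0).trans_lt (lt_add_one _))).trans_le
      (coe_le_asympResurgence hy fun s r hs hr _ =>
        eventually_not_le_intClosure hw ha hanz b hs hr ?_)
    rw [ha0, mul_zero]
    positivity
  refine ⟨?_, htop⟩
  rcases (skewWald_nonneg hw a).eq_or_lt with ha0 | hapos
  · rw [htop ha0.symm]
    exact le_top
  refine coe_le_asympResurgence (div_pos hwb hapos) fun s r hs hr hsr =>
    eventually_not_le_intClosure hw ha hanz b hs hr ?_
  rw [div_lt_div_iff₀ (by exact_mod_cast hr) hapos] at hsr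
  linarith

/-- **Theorem (lower bound for the asymptotic resurgence via skew Waldschmidt constants).**
Let `S` be a Noetherian domain with quotient field `K`, let `a`, `b` be graded families of
nonzero ideals in `S`, and let `v` be a valuation of `K` supported on `S` with `v̂(b) > 0`.
Then `v̂(b)/v̂(a) ≤ ρ̂(a, b̄)`; moreover, if `v̂(a) = 0` then `ρ̂(a, b̄) = ∞`. -/
theorem statement0 {S : Type u} [CommRing S] [IsDomain S] [IsNoetherianRing S]
    (a b : ℕ → Ideal S) (ha : GradedFamily a) (hb : GradedFamily b)
    (hanz : ∀ i : ℕ, 1 ≤ i → a i ≠ ⊥) (hbnz : ∀ i : ℕ, 1 ≤ i → b i ≠ ⊥)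
    (w : ValuationOn S) (hw : w.Supported) (hwb : 0 < skewWald w b) :
    (((skewWald w b / skewWald w a : ℝ)) : EReal) ≤
        asympResurgence a (fun i => intClosure (b i)) ∧
      (skewWald w a = 0 → asympResurgence a (fun i => intClosure (b i)) = ⊤) :=
  statement0_general a b ha hanz w hw hwb
end

section
/- Let 𝔞_• and 𝔟_• be filtrations of ideals in a Noetherian commutative ring S. Suppose {s_n}_{n∈ℕ} and {r_n}_{n∈ℕ} are sequences of positive integers such that lim_{n→∞} s_n = lim_{n→∞} r_n = ∞, 𝔞_{s_n} ⊆ 𝔟_{r_n} for all n, and lim_{n→∞} s_n/r_n = h for some real number h ≥ 0. Then ρ̂(𝔞_•, 𝔟_•) ≤ h. -/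
open Filter Polynomial
open scoped ENNReal NNReal

set_option synthInstance.maxHeartbeats 1000000
set_option maxHeartbeats 1000000

universe u

/-- **Lemma.** Let `a`, `b` be filtrations of ideals in a Noetherian ring `S`. If `s n`, `r n`
are sequences of positive integers tending to infinity with `a (s n) ⊆ b (r n)` for all `n`
and `s n / r n → h ≥ 0`, then `ρ̂(a, b) ≤ h`. -/
theorem statement3 {S : Type u} [CommRing S] [IsNoetherianRing S]
    (a b : ℕ → Ideal S) (ha : IdealFiltration a) (hb : IdealFiltration b)
    (s r : ℕ → ℕ) (hs : ∀ n, 0 < s n) (hr : ∀ n, 0 < r n)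
    (hstop : Tendsto s atTop atTop) (hrtop : Tendsto r atTop atTop)
    (hcont : ∀ n, a (s n) ≤ b (r n))
    (h : ℝ) (hh : 0 ≤ h)
    (hlim : Tendsto (fun n => (s n : ℝ) / (r n : ℝ)) atTop (nhds h)) :
    asympResurgence a b ≤ (h : EReal) := by
  have hA : Antitone a := antitone_nat_of_succ_le ha.2
  have hB : Antitone b := antitone_nat_of_succ_le hb.2
  apply sSup_le
  rintro x ⟨s₀, r₀, hs₀, hr₀, hF, rfl⟩
  rw [EReal.coe_le_coe_iff]
  by_contra hcon
  have hlt : h < (s₀ : ℝ) / (r₀ : ℝ) := lt_of_not_ge hcon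
  have hr₀R : (0 : ℝ) < (r₀ : ℝ) := by exact_mod_cast hr₀
  have hs₀R : (0 : ℝ) < (s₀ : ℝ) := by exact_mod_cast hs₀
  have hkey : (r₀ : ℝ) * h < (s₀ : ℝ) := by
    have := (lt_div_iff₀ hr₀R).mp hlt
    linarith
  -- r n → ∞ as reals
  have hrR : Tendsto (fun n => (r n : ℝ)) atTop atTop :=
    tendsto_natCast_atTop_atTop.comp hrtop
  have h0 : Tendsto (fun n => ((r₀ : ℝ) * (s₀ : ℝ)) / (r n : ℝ)) atTop (nhds 0) :=
    tendsto_const_nhds.div_atTop hrR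
  have hsum : Tendsto (fun n => (r₀ : ℝ) * ((s n : ℝ) / (r n : ℝ))
      + ((r₀ : ℝ) * (s₀ : ℝ)) / (r n : ℝ)) atTop (nhds ((r₀ : ℝ) * h + 0)) :=
    (hlim.const_mul _).add h0
  rw [add_zero] at hsum
  have hev : ∀ᶠ n in atTop, (r₀ : ℝ) * (s n : ℝ) + (r₀ : ℝ) * (s₀ : ℝ)
      < (s₀ : ℝ) * (r n : ℝ) := by
    filter_upwards [hsum.eventually (eventually_lt_nhds hkey)] with n hn
    have hrn : (0 : ℝ) < (r n : ℝ) := by exact_mod_cast hr n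
    have heq : (r₀ : ℝ) * ((s n : ℝ) / (r n : ℝ)) + ((r₀ : ℝ) * (s₀ : ℝ)) / (r n : ℝ)
        = ((r₀ : ℝ) * (s n : ℝ) + (r₀ : ℝ) * (s₀ : ℝ)) / (r n : ℝ) := by ring
    rw [heq] at hn
    have := (div_lt_iff₀ hrn).mp hn
    linarith
  rw [eventually_atTop] at hF
  obtain ⟨N, hN⟩ := hF
  have hevs : ∀ᶠ n in atTop, s₀ * N ≤ s n := hstop.eventually_ge_atTop (s₀ * N)
  obtain ⟨n, hn1, hn2⟩ := (hev.and hevs).exists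
  set t := s n / s₀ + 1 with ht
  -- natural number inequality from the real one
  have hnat : r₀ * s n + r₀ * s₀ ≤ s₀ * r n := by
    have : ((r₀ * s n + r₀ * s₀ : ℕ) : ℝ) < ((s₀ * r n : ℕ) : ℝ) := by push_cast; linarith
    exact le_of_lt (by exact_mod_cast this)
  -- s n ≤ s₀ * t
  have hle1 : s n ≤ s₀ * t := by
    have h1 := Nat.div_add_mod (s n) s₀
    have h2 := Nat.mod_lt (s n) hs₀
    have : s₀ * t = s₀ * (s n / s₀) + s₀ := by rw [ht, Nat.mul_add, Nat.mul_one]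
    omega
  -- r₀ * t ≤ r n
  have hle2 : r₀ * t ≤ r n := by
    have hq : s n / s₀ * s₀ ≤ s n := Nat.div_mul_le_self _ _
    have : (r₀ * t) * s₀ ≤ (r n) * s₀ := by
      calc (r₀ * t) * s₀ = r₀ * (s n / s₀ * s₀) + r₀ * s₀ := by rw [ht]; ring
        _ ≤ r₀ * s n + r₀ * s₀ := by
            exact Nat.add_le_add_right (Nat.mul_le_mul_left _ hq) _
        _ ≤ s₀ * r n := hnat
        _ = r n * s₀ := Nat.mul_comm _ _
    exact Nat.le_of_mul_le_mul_right this hs₀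
  -- t ≥ N
  have htN : N ≤ t := by
    have : N ≤ s n / s₀ := (Nat.le_div_iff_mul_le hs₀).mpr (by
      calc N * s₀ = s₀ * N := Nat.mul_comm _ _
        _ ≤ s n := hn2)
    omega
  exact hN t htN (le_trans (hA hle1) (le_trans (hcont n) (hB hle2)))
end

section
/- Let 𝔞_•, 𝔟_•, and 𝔟'_• be filtrations of ideals in a Noetherian commutative ring S. Suppose that 𝔟_i ⊆ 𝔟'_i for all i ≥ 1 and that the Rees algebra ℛ(𝔟'_•) is a finitely generated module over the Rees algebra ℛ(𝔟_•). Then ρ̂(𝔞_•, 𝔟'_•) = ρ̂(𝔞_•, 𝔟_•). -/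
open Filter Polynomial
open scoped ENNReal NNReal

set_option synthInstance.maxHeartbeats 1000000
set_option maxHeartbeats 1000000

universe u

/-- Key lemma: if `ℛ(b')` is module-finite over `ℛ(b)` and `b` is a filtration,
then `b' m ⊆ b (m - k)` for some `k` and all `m`. -/
lemma aux_rees_shift {S : Type u} [CommRing S] {b b' : ℕ → Ideal S}
    (hb : IdealFiltration b) (hfg : ReesFGModule b b') :
    ∃ k : ℕ, ∀ m : ℕ, b' m ≤ b (m - k) := by
  obtain ⟨G, hG, hgen⟩ := hfg
  refine ⟨G.sup Polynomial.natDegree, fun m x hx => ?_⟩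
  set k := G.sup Polynomial.natDegree with hk
  have hmono : Antitone b := antitone_nat_of_succ_le hb.2
  have hp : (Polynomial.C x * Polynomial.X ^ m) ∈ ReesSet b' := by
    intro n
    rw [Polynomial.coeff_C_mul, Polynomial.coeff_X_pow]
    by_cases h : n = m
    · subst h; simpa using hx
    · simp [h]
  obtain ⟨c, hc, hEq⟩ := hgen _ hp
  have hx' : x = (Polynomial.C x * Polynomial.X ^ m).coeff m := by simp
  rw [hx', hEq, Polynomial.finset_sum_coeff]
  apply Ideal.sum_mem
  intro g hg
  rw [Polynomial.coeff_mul]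
  apply Ideal.sum_mem
  intro ij hij
  have hsum := Finset.HasAntidiagonal.mem_antidiagonal.mp hij
  by_cases hj : ij.2 ≤ k
  · have h1 : (c g).coeff ij.1 ∈ b ij.1 := hc g hg ij.1
    have h2 : m - k ≤ ij.1 := by omega
    exact hmono h2 (Ideal.mul_mem_right _ _ h1)
  · have h0 : g.coeff ij.2 = 0 := by
      apply Polynomial.coeff_eq_zero_of_natDegree_lt
      have := Finset.le_sup (f := Polynomial.natDegree) hg
      omega
    simp [h0]

/-- **Theorem.** Let `a`, `b`, `b'` be filtrations of ideals in a Noetherian ring `S` with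
`b ≤ b'` and `ℛ(b')` a finitely generated `ℛ(b)`-module. Then `ρ̂(a, b') = ρ̂(a, b)`. -/
theorem statement4 {S : Type u} [CommRing S] [IsNoetherianRing S]
    (a b b' : ℕ → Ideal S) (ha : IdealFiltration a) (hb : IdealFiltration b)
    (hb' : IdealFiltration b')
    (hle : ∀ i : ℕ, 1 ≤ i → b i ≤ b' i)
    (hfg : ReesFGModule b b') :
    asympResurgence a b' = asympResurgence a b := by
  obtain ⟨k, hkey⟩ := aux_rees_shift hb hfg
  have hbmono : Antitone b := antitone_nat_of_succ_le hb.2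
  unfold asympResurgence
  apply le_antisymm
  · -- `ρ̂(a,b') ≤ ρ̂(a,b)` since `b ≤ b'`
    apply sSup_le_sSup
    rintro x ⟨s, r, hs, hr, hev, rfl⟩
    refine ⟨s, r, hs, hr, ?_, rfl⟩
    filter_upwards [hev, eventually_ge_atTop 1] with t ht ht1
    intro hcon
    exact ht (hcon.trans (hle (r * t) (Nat.mul_pos hr ht1)))
  · -- `ρ̂(a,b) ≤ ρ̂(a,b')` via the shift `k`
    apply sSup_le
    rintro x ⟨s, r, hs, hr, hev, rfl⟩
    apply le_of_forall_lt
    intro c hc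
    obtain ⟨z, hcz, hz⟩ := exists_between hc
    have hzbot : z ≠ ⊥ := (bot_le.trans_lt hcz).ne'
    have hztop : z ≠ ⊤ := (hz.trans (EReal.coe_lt_top _)).ne
    set z' : ℝ := z.toReal with hz'def
    have hzz' : (z' : EReal) = z := EReal.coe_toReal hztop hzbot
    have hrpos : (0 : ℝ) < (r : ℝ) := by exact_mod_cast hr
    have hz'lt : z' < (s : ℝ) / (r : ℝ) := by
      rw [← EReal.coe_lt_coe_iff, hzz']; exact hz
    -- the sequence `sM/(rM+k)` tends to `s/r`
    have htend : Tendsto (fun M : ℕ => ((s : ℝ) * M) / ((r : ℝ) * M + k)) atTop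
        (nhds ((s : ℝ) / (r : ℝ))) := by
      have h0 : Tendsto (fun M : ℕ => (k : ℝ) / M) atTop (nhds 0) :=
        tendsto_const_div_atTop_nhds_zero_nat (k : ℝ)
      have h2 : Tendsto (fun M : ℕ => (r : ℝ) + (k : ℝ) / M) atTop (nhds ((r : ℝ) + 0)) :=
        tendsto_const_nhds.add h0
      rw [add_zero] at h2
      have h1 : Tendsto (fun M : ℕ => (s : ℝ) / ((r : ℝ) + (k : ℝ) / M)) atTop
          (nhds ((s : ℝ) / (r : ℝ))) := tendsto_const_nhds.div h2 (ne_of_gt hrpos)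
      refine Tendsto.congr' ?_ h1
      filter_upwards [eventually_ge_atTop 1] with M hM
      have hMpos : (0 : ℝ) < (M : ℝ) := by exact_mod_cast hM
      have hden : (r : ℝ) * M + k > 0 := by positivity
      field_simp
    obtain ⟨M, hMgt, hM1⟩ := ((htend.eventually (eventually_gt_nhds hz'lt)).and
      (eventually_ge_atTop 1)).exists
    -- membership of `sM/(rM+k)` in the `b'`-set
    obtain ⟨T0, hT0⟩ := eventually_atTop.mp hev
    have hmem : ((((s * M : ℕ) : ℝ) / ((r * M + k : ℕ) : ℝ) : ℝ) : EReal) ∈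
        {x : EReal | ∃ s r : ℕ, 0 < s ∧ 0 < r ∧
          (∀ᶠ t : ℕ in atTop, ¬ a (s * t) ≤ b' (r * t)) ∧
          x = (((s : ℝ) / (r : ℝ) : ℝ) : EReal)} := by
      refine ⟨s * M, r * M + k, Nat.mul_pos hs hM1, by positivity, ?_, rfl⟩
      filter_upwards [eventually_ge_atTop T0, eventually_ge_atTop 1] with τ hτT hτ1
      intro hcon
      have hτle : T0 ≤ M * τ := hτT.trans (Nat.le_mul_of_pos_left τ hM1)
      apply hT0 (M * τ) hτle
      have e1 : (r * M + k) * τ = r * M * τ + k * τ := by ring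
      have e2 : k ≤ k * τ := Nat.le_mul_of_pos_right k hτ1
      have h3 : r * M * τ ≤ (r * M + k) * τ - k := by omega
      have h4 : b' ((r * M + k) * τ) ≤ b (r * M * τ) :=
        (hkey _).trans (hbmono h3)
      have : a (s * M * τ) ≤ b (r * M * τ) := hcon.trans h4
      rwa [mul_assoc, mul_assoc] at this
    refine hcz.trans (lt_of_lt_of_le ?_ (le_sSup hmem))
    rw [← hzz']
    rw [EReal.coe_lt_coe_iff]
    calc z' < (s : ℝ) * M / ((r : ℝ) * M + k) := hMgt
      _ = ((s * M : ℕ) : ℝ) / ((r * M + k : ℕ) : ℝ) := by push_cast; ring_nf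
end

section
/- Let 𝔞_• and 𝔟_• be filtrations of ideals in a Noetherian commutative ring S, and let 𝔟'_• be a graded family of ideals such that 𝔟_i ⊆ 𝔟'_i for all i ≥ 1. Suppose there exists k ∈ ℕ such that 𝔟'_{i+k} ⊆ 𝔟_i for all i ∈ ℕ. Then ρ̂(𝔞_•, 𝔟'_•) = ρ̂(𝔞_•, 𝔟_•). -/
open Filter Polynomial
open scoped ENNReal NNReal

set_option synthInstance.maxHeartbeats 1000000
set_option maxHeartbeats 1000000

universe u

/-!
Enlarging the second family can only shrink `ρ̂`, so `ρ̂(a, b') ≤ ρ̂(a, b)`. Conversely, suppose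
`a (s t) ⊄ b (r t)` for `t ≫ 0`. Since `b` is descending, `b' ((r m + k) t) ⊆ b (r m t)`, hence
`a (s m t) ⊄ b' ((r m + k) t)` for `t ≫ 0`, i.e. `s m / (r m + k) ≤ ρ̂(a, b')` for every `m ≥ 1`.
Letting `m → ∞` gives `s / r ≤ ρ̂(a, b')`.
-/

open Topology

theorem tendsto_natCast_mul_div_mul_add (s r k : ℝ) (hr : r ≠ 0) :
    Tendsto (fun m : ℕ => s * m / (r * m + k)) atTop (𝓝 (s / r)) := by
  have h := (tendsto_natCast_div_add_atTop (k / r)).const_mul (s / r)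
  rw [mul_one] at h
  refine h.congr fun m => ?_
  rw [show (m : ℝ) + k / r = (r * m + k) / r by field_simp, div_div_eq_mul_div]
  field_simp

section AsympResurgence

variable {S : Type u} [CommRing S] {a b b' : ℕ → Ideal S}

theorem le_asympResurgence {s r : ℕ} (hs : 0 < s) (hr : 0 < r)
    (h : ∀ᶠ t in atTop, ¬ a (s * t) ≤ b (r * t)) :
    (((s : ℝ) / r : ℝ) : EReal) ≤ asympResurgence a b :=
  le_sSup ⟨s, r, hs, hr, h, rfl⟩

theorem asympResurgence_anti_right (hle : ∀ i, 1 ≤ i → b i ≤ b' i) :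
    asympResurgence a b' ≤ asympResurgence a b := by
  refine sSup_le_sSup ?_
  rintro _ ⟨s, r, hs, hr, hev, rfl⟩
  refine ⟨s, r, hs, hr, ?_, rfl⟩
  filter_upwards [hev, eventually_ge_atTop 1] with t ht ht1 hab
  exact ht (hab.trans (hle _ (Nat.mul_pos hr ht1)))

variable {k : ℕ}

theorem apply_add_le_of_shift (hb : Antitone b) (hshift : ∀ i, 1 ≤ i → b' (i + k) ≤ b i)
    {n j : ℕ} (hn : 1 ≤ n) (hj : k ≤ j) : b' (n + j) ≤ b n :=
  calc b' (n + j) = b' (n + (j - k) + k) := by rw [add_assoc, Nat.sub_add_cancel hj]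
    _ ≤ b (n + (j - k)) := hshift _ (by omega)
    _ ≤ b n := hb (Nat.le_add_right n _)

theorem eventually_not_le_mul_add_of_shift (hb : Antitone b)
    (hshift : ∀ i, 1 ≤ i → b' (i + k) ≤ b i) {s r m : ℕ} (hr : 0 < r) (hm : 0 < m)
    (h : ∀ᶠ t in atTop, ¬ a (s * t) ≤ b (r * t)) :
    ∀ᶠ t in atTop, ¬ a (s * m * t) ≤ b' ((r * m + k) * t) := by
  have hmt : Tendsto (m * ·) atTop atTop := tendsto_id.const_mul_atTop' hm
  filter_upwards [hmt.eventually h, eventually_ge_atTop 1] with t ht ht1 hab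
  refine ht ?_
  calc a (s * (m * t)) = a (s * m * t) := by rw [mul_assoc]
    _ ≤ b' ((r * m + k) * t) := hab
    _ = b' (r * (m * t) + k * t) := by ring_nf
    _ ≤ b (r * (m * t)) :=
      apply_add_le_of_shift hb hshift (Nat.mul_pos hr (Nat.mul_pos hm ht1))
        (Nat.le_mul_of_pos_right k ht1)

theorem asympResurgence_le_of_shift (hb : Antitone b) (hshift : ∀ i, 1 ≤ i → b' (i + k) ≤ b i) :
    asympResurgence a b ≤ asympResurgence a b' := by
  refine sSup_le ?_
  rintro _ ⟨s, r, hs, hr, hev, rfl⟩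
  have hlim : Tendsto (fun m : ℕ => ((((s * m : ℕ) : ℝ) / ((r * m + k : ℕ) : ℝ) : ℝ) : EReal))
      atTop (𝓝 (((s : ℝ) / r : ℝ) : EReal)) := by
    refine (continuous_coe_real_ereal.tendsto _).comp ?_
    push_cast
    exact tendsto_natCast_mul_div_mul_add _ _ _ (by positivity)
  refine le_of_tendsto hlim (eventually_atTop.mpr ⟨1, fun m hm => ?_⟩)
  exact le_asympResurgence (Nat.mul_pos hs hm) (Nat.add_pos_left (Nat.mul_pos hr hm) k)
    (eventually_not_le_mul_add_of_shift hb hshift hr hm hev)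

end AsympResurgence

theorem statement5_general {S : Type u} [CommRing S]
    (a b b' : ℕ → Ideal S) (hb : IdealFiltration b)
    (hle : ∀ i : ℕ, 1 ≤ i → b i ≤ b' i)
    (k : ℕ) (hcon : ∀ i : ℕ, 1 ≤ i → b' (i + k) ≤ b i) :
    asympResurgence a b' = asympResurgence a b :=
  le_antisymm (asympResurgence_anti_right hle)
    (asympResurgence_le_of_shift (antitone_nat_of_succ_le hb.2) hcon)

/-- **Corollary.** Let `a`, `b` be filtrations of ideals in a Noetherian ring `S` and `b'` a
graded family with `b ≤ b'` and `b' (i + k) ⊆ b i` for all `i ≥ 1`, for some `k`. Then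
`ρ̂(a, b') = ρ̂(a, b)`. -/
theorem statement5 {S : Type u} [CommRing S] [IsNoetherianRing S]
    (a b b' : ℕ → Ideal S) (ha : IdealFiltration a) (hb : IdealFiltration b)
    (hb' : GradedFamily b')
    (hle : ∀ i : ℕ, 1 ≤ i → b i ≤ b' i)
    (k : ℕ) (hk : 0 < k) (hcon : ∀ i : ℕ, 1 ≤ i → b' (i + k) ≤ b i) :
    asympResurgence a b' = asympResurgence a b :=
  statement5_general a b b' hb hle k hcon
end

section
/- Let 𝔞_• and 𝔟_• be filtrations of ideals in a Noetherian commutative ring S. Suppose that ℛ(𝔟̄_•) is a finitely generated module over ℛ(𝔟_•). Then ρ̂(𝔞_•, 𝔟̄_•) = ρ̂(𝔞_•, 𝔟_•). -/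
open Filter Polynomial
open scoped ENNReal NNReal

set_option synthInstance.maxHeartbeats 1000000
set_option maxHeartbeats 1000000

universe u

section Aux

variable {S : Type u} [CommRing S]

lemma le_intClosure' (I : Ideal S) : I ≤ intClosure I := by
  intro x hx
  apply Ideal.subset_span
  refine ⟨1, one_pos, fun _ => -x, ?_, ?_⟩
  · intro i h1 h2
    have : i = 1 := le_antisymm h2 h1
    subst this
    simpa [pow_one] using (neg_mem hx : -x ∈ I)
  · simp [Finset.Icc_self]

lemma filt_anti' {b : ℕ → Ideal S} (h : ∀ p, b (p+1) ≤ b p) {n m : ℕ}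
    (hmn : n ≤ m) : b m ≤ b n := by
  induction hmn with
  | refl => exact le_rfl
  | step _ ih => exact (h _).trans ih

lemma rees_bound' {b : ℕ → Ideal S} (hbd : ∀ p, b (p+1) ≤ b p)
    (hfg : ReesFGModule b (fun i => intClosure (b i))) :
    ∃ k : ℕ, ∀ n : ℕ, intClosure (b (n + k)) ≤ b n := by
  obtain ⟨G, hG, hspan⟩ := hfg
  refine ⟨G.sup Polynomial.natDegree, fun n x hx => ?_⟩
  set k := G.sup Polynomial.natDegree with hkdef
  have hp : (C x * X ^ (n + k)) ∈ ReesSet (fun i => intClosure (b i)) := by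
    intro m
    simp only [coeff_C_mul, coeff_X_pow]
    by_cases h : m = n + k
    · subst h; simpa using hx
    · simp [h]
  obtain ⟨c, hc, hsum⟩ := hspan _ hp
  have hx' : x = ∑ g ∈ G, ((c g * g).coeff (n + k)) := by
    have h := congrArg (fun p => Polynomial.coeff p (n + k)) hsum
    simpa [Polynomial.finset_sum_coeff, coeff_C_mul, coeff_X_pow] using h
  rw [hx']
  apply Ideal.sum_mem
  intro g hg
  rw [coeff_mul]
  apply Ideal.sum_mem
  rintro ⟨i, j⟩ hij
  by_cases hj : j ≤ g.natDegree
  · have hjk : j ≤ k := hj.trans (Finset.le_sup hg)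
    have hij' : i + j = n + k := Finset.HasAntidiagonal.mem_antidiagonal.mp hij
    have hni : n ≤ i := by omega
    exact Ideal.mul_mem_right _ _ (filt_anti' hbd hni ((hc g hg) i))
  · have hz : g.coeff j = 0 := coeff_eq_zero_of_natDegree_lt (lt_of_not_ge hj)
    simp [hz]

end Aux

/-- **Corollary.** Let `a`, `b` be filtrations of ideals in a Noetherian ring `S` such that
`ℛ(b̄)` is a finitely generated `ℛ(b)`-module. Then `ρ̂(a, b̄) = ρ̂(a, b)`. -/
theorem statement6 {S : Type u} [CommRing S] [IsNoetherianRing S]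
    (a b : ℕ → Ideal S) (ha : IdealFiltration a) (hb : IdealFiltration b)
    (hfg : ReesFGModule b (fun i => intClosure (b i))) :
    asympResurgence a (fun i => intClosure (b i)) = asympResurgence a b := by
  obtain ⟨k, hk⟩ := rees_bound' hb.2 hfg
  apply le_antisymm
  · apply sSup_le_sSup
    rintro x ⟨s, r, hs, hr, hev, rfl⟩
    exact ⟨s, r, hs, hr,
      hev.mono (fun t h hle => h (hle.trans (le_intClosure' _))), rfl⟩
  · apply sSup_le
    rintro x ⟨s, r, hs, hr, hev, rfl⟩
    have key : ∀ N : ℕ,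
        ((((s*(N+1) : ℕ) : ℝ) / ((r*(N+1)+k : ℕ) : ℝ) : ℝ) : EReal) ≤
          asympResurgence a (fun i => intClosure (b i)) := by
      intro N
      apply le_sSup
      refine ⟨s*(N+1), r*(N+1)+k, by positivity, by positivity, ?_, rfl⟩
      obtain ⟨T, hT⟩ := eventually_atTop.mp hev
      refine eventually_atTop.mpr ⟨max T 1, fun t ht hle => ?_⟩
      have ht1 : 1 ≤ t := le_of_max_le_right ht
      have htT : T ≤ t := le_of_max_le_left ht
      obtain ⟨u, rfl⟩ : ∃ u, t = u + 1 := ⟨t - 1, by omega⟩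
      have h1 : ¬ a (s * ((N+1)*(u+1))) ≤ b (r * ((N+1)*(u+1))) := by
        apply hT
        calc T ≤ u + 1 := htT
          _ ≤ (N+1)*(u+1) := Nat.le_mul_of_pos_left _ (Nat.succ_pos N)
      apply h1
      have e1 : s*(N+1)*(u+1) = s*((N+1)*(u+1)) := by ring
      have e2 : (r*(N+1)+k)*(u+1) = (r*((N+1)*(u+1)) + k*u) + k := by ring
      calc a (s*((N+1)*(u+1))) = a (s*(N+1)*(u+1)) := by rw [e1]
        _ ≤ intClosure (b ((r*(N+1)+k)*(u+1))) := hle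
        _ = intClosure (b ((r*((N+1)*(u+1)) + k*u) + k)) := by rw [e2]
        _ ≤ b (r*((N+1)*(u+1)) + k*u) := hk _
        _ ≤ b (r*((N+1)*(u+1))) := filt_anti' hb.2 (Nat.le_add_right _ _)
    have hrpos : (0:ℝ) < (r:ℝ) := by exact_mod_cast hr
    have h0 : Tendsto (fun N : ℕ => (k:ℝ)/((N:ℝ)+1)) atTop (nhds 0) := by
      apply Tendsto.div_atTop tendsto_const_nhds
      exact tendsto_atTop_add_const_right atTop 1 tendsto_natCast_atTop_atTop
    have hlim : Tendsto
        (fun N : ℕ => (((s*(N+1) : ℕ) : ℝ) / ((r*(N+1)+k : ℕ) : ℝ)))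
        atTop (nhds ((s:ℝ)/(r:ℝ))) := by
      have h2 : Tendsto (fun N : ℕ => (s:ℝ)/((r:ℝ)+(k:ℝ)/((N:ℝ)+1))) atTop
          (nhds ((s:ℝ)/((r:ℝ)+0))) :=
        Tendsto.div tendsto_const_nhds (tendsto_const_nhds.add h0)
          (by simpa using hrpos.ne')
      rw [add_zero] at h2
      refine h2.congr (fun N => ?_)
      have hN : ((N:ℝ)+1) ≠ 0 := by positivity
      have hd : (r:ℝ)*((N:ℝ)+1)+(k:ℝ) ≠ 0 := by positivity
      push_cast
      rw [div_eq_div_iff (by positivity) hd]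
      field_simp
    have hlim' : Tendsto
        (fun N : ℕ => ((((s*(N+1) : ℕ) : ℝ) / ((r*(N+1)+k : ℕ) : ℝ) : ℝ) : EReal))
        atTop (nhds ((((s:ℝ)/(r:ℝ) : ℝ)) : EReal)) :=
      EReal.tendsto_coe.mpr hlim
    exact le_of_tendsto hlim' (Eventually.of_forall key)
end

section
/- Let S be a Noetherian domain and let 𝔞_• and 𝔟_• be graded families of nonzero ideals in S such that ℛ^{[k]}(𝔟_•) is a standard graded S-algebra for some k ∈ ℕ. If s, r ∈ ℕ satisfy s/r < ρ̂(𝔞_•, 𝔟̄_•), then 𝔞_{st} ⊄ 𝔟̄_{rt} for all t ≫ 1. -/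
open Filter Polynomial
open scoped ENNReal NNReal

set_option synthInstance.maxHeartbeats 1000000
set_option maxHeartbeats 1000000

universe u

section AuxStatement8

variable {S : Type u} [CommRing S]

private lemma gf_pow_le {a : ℕ → Ideal S} (ha : GradedFamily a) (p : ℕ) :
    ∀ m : ℕ, a p ^ m ≤ a (p * m) := by
  intro m
  induction m with
  | zero => rw [pow_zero, Nat.mul_zero, ha.1, Ideal.one_eq_top]
  | succ m ih =>
      rw [pow_succ]
      calc a p ^ m * a p ≤ a (p * m) * a p := Ideal.mul_mono ih le_rfl
        _ ≤ a (p * m + p) := ha.2 _ _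
        _ = a (p * (m + 1)) := by rw [Nat.mul_succ]

private lemma ideal_pow_right_mono {A B : Ideal S} (hAB : A ≤ B) (n : ℕ) : A ^ n ≤ B ^ n := by
  induction n with
  | zero => simp
  | succ n ih => rw [pow_succ, pow_succ]; exact Ideal.mul_mono ih hAB

private lemma intClosure_pow_deficit {K : Ideal S} {z : S} (hz : z ∈ intClosure K) :
    ∃ d : ℕ, ∀ j : ℕ, z ^ (d + j) ∈ K ^ j := by
  classical
  refine Submodule.span_induction (p := fun z _ => ∃ d : ℕ, ∀ j : ℕ, z ^ (d + j) ∈ K ^ j)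
    ?_ ?_ ?_ ?_ hz
  · rintro g ⟨n, hn, c, hc, heq⟩
    obtain ⟨m, rfl⟩ : ∃ m, n = m + 1 := ⟨n - 1, (Nat.succ_pred_eq_of_pos hn).symm⟩
    have hg : g ^ (m + 1) = -∑ i ∈ Finset.Icc 1 (m + 1), c i * g ^ (m + 1 - i) :=
      eq_neg_of_add_eq_zero_left heq
    have main : ∀ j : ℕ, ∃ u : ℕ → S,
        (∀ i, i < m + 1 → u i ∈ K ^ (j + (m - i))) ∧
        g ^ (m + j) = ∑ i ∈ Finset.range (m + 1), u i * g ^ i := by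
      intro j
      induction j with
      | zero =>
          refine ⟨fun i => if i = m then 1 else 0, ?_, ?_⟩
          · intro i hi
            by_cases h : i = m
            · subst h
              simp [Ideal.one_eq_top]
            · simp [h]
          · have hcongr : ∀ i ∈ Finset.range (m + 1),
                (if i = m then (1 : S) else 0) * g ^ i = if i = m then g ^ i else 0 := by
              intro i _
              split <;> simp
            rw [Nat.add_zero, Finset.sum_congr rfl hcongr, Finset.sum_ite_eq' (Finset.range (m + 1)) m]
            simp
      | succ j ih =>
          obtain ⟨u, hu, hsum⟩ := ih
          refine ⟨fun i => (if i = 0 then 0 else u (i - 1)) - u m * c (m + 1 - i), ?_, ?_⟩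
          · intro i hi
            have him : i ≤ m := Nat.lt_succ_iff.mp hi
            refine Submodule.sub_mem _ ?_ ?_
            · by_cases h : i = 0
              · simp [h]
              · have hi1 : i - 1 < m + 1 := by omega
                have hmem := hu (i - 1) hi1
                have hexp : j + (m - (i - 1)) = (j + 1) + (m - i) := by omega
                rw [hexp] at hmem
                simpa [h] using hmem
            · have h1 : u m ∈ K ^ j := by
                have := hu m (Nat.lt_succ_self m)
                simpa using this
              have h2 : c (m + 1 - i) ∈ K ^ (m + 1 - i) := hc _ (by omega) (by omega)
              have h3 := Ideal.mul_mem_mul h1 h2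
              rw [← pow_add] at h3
              have hexp : j + (m + 1 - i) = (j + 1) + (m - i) := by omega
              rwa [hexp] at h3
          · have hpiece1 : ∑ i ∈ Finset.range (m + 1),
                (if i = 0 then (0 : S) else u (i - 1)) * g ^ i
                = ∑ i ∈ Finset.range m, u i * g ^ (i + 1) := by
              rw [Finset.sum_range_succ']
              simp
            have hpiece2 : ∑ i ∈ Finset.range (m + 1), u m * c (m + 1 - i) * g ^ i
                = u m * ∑ l ∈ Finset.Icc 1 (m + 1), c l * g ^ (m + 1 - l) := by
              rw [Finset.mul_sum, ← Finset.Ico_add_one_right_eq_Icc, Finset.sum_Ico_eq_sum_range]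
              have hset : m + 1 + 1 - 1 = m + 1 := by omega
              rw [hset]
              rw [← Finset.sum_range_reflect (fun i => u m * c (m + 1 - i) * g ^ i) (m + 1)]
              refine Finset.sum_congr rfl fun i hi => ?_
              have him : i ≤ m := Nat.lt_succ_iff.mp (Finset.mem_range.mp hi)
              rw [show m + 1 - 1 - i = m - i by omega,
                  show m + 1 - (m - i) = i + 1 by omega,
                  show m + 1 - (1 + i) = m - i by omega,
                  show 1 + i = i + 1 by omega]
              ring
            have hmulsum : g * ∑ i ∈ Finset.range (m + 1), u i * g ^ i
                = ∑ i ∈ Finset.range (m + 1), u i * g ^ (i + 1) := by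
              rw [Finset.mul_sum]
              refine Finset.sum_congr rfl fun i _ => by ring
            calc g ^ (m + (j + 1)) = g * g ^ (m + j) := by ring
              _ = g * ∑ i ∈ Finset.range (m + 1), u i * g ^ i := by rw [hsum]
              _ = ∑ i ∈ Finset.range (m + 1), u i * g ^ (i + 1) := hmulsum
              _ = (∑ i ∈ Finset.range m, u i * g ^ (i + 1)) + u m * g ^ (m + 1) :=
                  Finset.sum_range_succ _ _
              _ = (∑ i ∈ Finset.range m, u i * g ^ (i + 1))
                    - u m * ∑ l ∈ Finset.Icc 1 (m + 1), c l * g ^ (m + 1 - l) := by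
                  rw [hg]; ring
              _ = ∑ i ∈ Finset.range (m + 1),
                    ((if i = 0 then 0 else u (i - 1)) - u m * c (m + 1 - i)) * g ^ i := by
                  rw [Finset.sum_congr rfl fun i _ => sub_mul
                    (if i = 0 then (0 : S) else u (i - 1)) (u m * c (m + 1 - i)) (g ^ i),
                    Finset.sum_sub_distrib, hpiece1, hpiece2]
    refine ⟨m, fun j => ?_⟩
    obtain ⟨u, hu, hsum⟩ := main j
    rw [show m + j = j + m by omega] at hsum
    rw [show m + j = j + m by omega, hsum]
    refine Submodule.sum_mem _ fun i hi => ?_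
    have hmem : u i ∈ K ^ (j + (m - i)) := hu i (Finset.mem_range.mp hi)
    have hle : K ^ (j + (m - i)) ≤ K ^ j := Ideal.pow_le_pow_right (Nat.le_add_right _ _)
    exact Ideal.mul_mem_right _ _ (hle hmem)
  · exact ⟨1, fun j => by rw [zero_pow (by omega : 1 + j ≠ 0)]; exact zero_mem _⟩
  · rintro y z hy hz ⟨dy, hdy⟩ ⟨dz, hdz⟩
    refine ⟨dy + dz, fun j => ?_⟩
    set M := dy + dz + j with hM
    rw [add_pow]
    refine Submodule.sum_mem _ fun i hi => ?_
    have hiM : i ≤ M := Nat.lt_succ_iff.mp (Finset.mem_range.mp hi)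
    by_cases h1 : dy + j ≤ i
    · have hyi : y ^ i ∈ K ^ j := by
        have := hdy (i - dy)
        rw [show dy + (i - dy) = i by omega] at this
        exact Ideal.pow_le_pow_right (by omega) this
      exact Ideal.mul_mem_right _ _ (Ideal.mul_mem_right _ _ hyi)
    · by_cases h2 : dz + j ≤ M - i
      · have hzi : z ^ (M - i) ∈ K ^ j := by
          have := hdz (M - i - dz)
          rw [show dz + (M - i - dz) = M - i by omega] at this
          exact Ideal.pow_le_pow_right (by omega) this
        exact Ideal.mul_mem_right _ _ (Ideal.mul_mem_left _ _ hzi)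
      · have hdyi : dy ≤ i := by omega
        have hdzi : dz ≤ M - i := by omega
        have hyi : y ^ i ∈ K ^ (i - dy) := by
          have := hdy (i - dy)
          rwa [show dy + (i - dy) = i by omega] at this
        have hzi : z ^ (M - i) ∈ K ^ (M - i - dz) := by
          have := hdz (M - i - dz)
          rwa [show dz + (M - i - dz) = M - i by omega] at this
        have hprod := Ideal.mul_mem_mul hyi hzi
        rw [← pow_add, show i - dy + (M - i - dz) = j by omega] at hprod
        exact Ideal.mul_mem_right _ _ hprod
  · rintro u z hzmem ⟨d, hd⟩
    refine ⟨d, fun j => ?_⟩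
    rw [smul_eq_mul, mul_pow]
    exact Ideal.mul_mem_left _ _ (hd j)

private lemma ar_strip [IsNoetherianRing S] [IsDomain S] (I : Ideal S) {c : S} (hc : c ≠ 0) :
    ∃ h : ℕ, ∀ g n y, h * g ≤ n → c ^ g * y ∈ I ^ n → y ∈ I ^ (n - h * g) := by
  obtain ⟨h, hAR⟩ := Ideal.exists_pow_inf_eq_pow_smul I (Ideal.span {c} : Ideal S)
  refine ⟨h, ?_⟩
  have step : ∀ n y, h ≤ n → c * y ∈ I ^ n → y ∈ I ^ (n - h) := by
    intro n y hn hcy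
    have h1 : c * y ∈ (I ^ n • (⊤ : Ideal S) ⊓ Ideal.span {c} : Ideal S) := by
      refine Submodule.mem_inf.mpr ⟨?_, ?_⟩
      · rw [Ideal.smul_eq_mul, Ideal.mul_top]
        exact hcy
      · exact Ideal.mem_span_singleton'.mpr ⟨y, mul_comm y c⟩
    rw [hAR n hn] at h1
    have h2 : (I ^ (n - h) • (I ^ h • (⊤ : Ideal S) ⊓ Ideal.span {c}) : Ideal S)
        ≤ Ideal.span {c} * I ^ (n - h) :=
      calc (I ^ (n - h) • (I ^ h • (⊤ : Ideal S) ⊓ Ideal.span {c}) : Ideal S)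
          = I ^ (n - h) * (I ^ h • (⊤ : Ideal S) ⊓ Ideal.span {c}) := Ideal.smul_eq_mul _ _
        _ ≤ I ^ (n - h) * Ideal.span {c} := Ideal.mul_mono le_rfl inf_le_right
        _ = Ideal.span {c} * I ^ (n - h) := mul_comm _ _
    obtain ⟨z, hz, hcz⟩ := Ideal.mem_span_singleton_mul.mp (h2 h1)
    have hzy : z = y := mul_left_cancel₀ hc hcz
    rwa [hzy] at hz
  intro g
  induction g with
  | zero =>
      intro n y _ hy
      simpa using hy
  | succ g ih =>
      intro n y hle hy
      have e1 : h * (g + 1) = h * g + h := by ring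
      have h1 : c ^ g * (c * y) ∈ I ^ n := by
        have hre : c ^ (g + 1) * y = c ^ g * (c * y) := by ring
        rwa [hre] at hy
      have h2 : c * y ∈ I ^ (n - h * g) := ih n (c * y) (by omega) h1
      have h3 : y ∈ I ^ (n - h * g - h) := step (n - h * g) y (by omega) h2
      rwa [show n - h * g - h = n - h * (g + 1) by omega] at h3

private lemma mem_intClosure_of_pow_mem {I : Ideal S} {x : S} {E : ℕ} (hE : 0 < E)
    (h : x ^ E ∈ I ^ E) : x ∈ intClosure I := by
  classical
  apply Ideal.subset_span
  refine ⟨E, hE, fun i => if i = E then -(x ^ E) else 0, ?_, ?_⟩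
  · intro i _ _
    by_cases hi : i = E
    · subst hi
      simpa using neg_mem h
    · simp [hi]
  · have hcongr : ∀ i ∈ Finset.Icc 1 E,
        (if i = E then -(x ^ E) else 0) * x ^ (E - i)
          = if i = E then -(x ^ E) * x ^ (E - i) else 0 := by
      intro i _
      split <;> simp
    rw [Finset.sum_congr rfl hcongr, Finset.sum_ite_eq' (Finset.Icc 1 E) E,
      if_pos (Finset.mem_Icc.mpr ⟨hE, le_refl E⟩)]
    simp

end AuxStatement8

/-- **Lemma.** Let `S` be a Noetherian domain, `a`, `b` graded families of nonzero ideals with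
`ℛ^{[k]}(b)` a standard graded `S`-algebra. If `s / r < ρ̂(a, b̄)`, then `a (s*t) ⊄ b̄ (r*t)`
for all `t ≫ 1`. -/
theorem statement8 {S : Type u} [CommRing S] [IsDomain S] [IsNoetherianRing S]
    (a b : ℕ → Ideal S) (ha : GradedFamily a) (hb : GradedFamily b)
    (hanz : ∀ i : ℕ, 1 ≤ i → a i ≠ ⊥) (hbnz : ∀ i : ℕ, 1 ≤ i → b i ≠ ⊥)
    (k : ℕ) (hk : 0 < k) (hst : StdVeronese b k)
    (s r : ℕ) (hs : 0 < s) (hr : 0 < r)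
    (hlt : (((s : ℝ) / (r : ℝ) : ℝ) : EReal) <
      asympResurgence a (fun i => intClosure (b i))) :
    ∀ᶠ t : ℕ in atTop, ¬ a (s * t) ≤ intClosure (b (r * t)) := by
  classical
  simp only [asympResurgence] at hlt
  obtain ⟨y, hy, hlty⟩ := lt_sSup_iff.mp hlt
  obtain ⟨s', r', hs', hr', hev, rfl⟩ := hy
  have hratio : (s : ℝ) / (r : ℝ) < (s' : ℝ) / (r' : ℝ) := EReal.coe_lt_coe_iff.mp hlty
  have hlt' : s * r' < s' * r := by
    have h1 : (0 : ℝ) < (r : ℝ) := by exact_mod_cast hr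
    have h2 : (0 : ℝ) < (r' : ℝ) := by exact_mod_cast hr'
    rw [div_lt_div_iff₀ h1 h2] at hratio
    exact_mod_cast hratio
  obtain ⟨N₀, hN₀⟩ := Filter.eventually_atTop.mp hev
  set T₀ := k * (N₀ + 1) with hT₀def
  have hT₀N : N₀ ≤ T₀ := by
    calc N₀ ≤ 1 * (N₀ + 1) := by omega
      _ ≤ k * (N₀ + 1) := Nat.mul_le_mul_right _ hk
  have hnc : ¬ a (s' * T₀) ≤ intClosure (b (r' * T₀)) := hN₀ T₀ hT₀N
  obtain ⟨x, hxa, hx⟩ := SetLike.not_le_iff_exists.mp hnc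
  set J := s' * T₀ with hJdef
  have hJpos : 0 < J := by positivity
  set V₀ := r' * (N₀ + 1) with hV₀def
  have hV₀pos : 0 < V₀ := by positivity
  have hbV : b (r' * T₀) = b k ^ V₀ := by
    rw [show r' * T₀ = k * V₀ by rw [hT₀def, hV₀def]; ring]
    exact hst V₀ hV₀pos
  by_contra hcon
  rw [Filter.not_eventually] at hcon
  simp only [not_not] at hcon
  have hfreq : ∀ M : ℕ, ∃ t, M ≤ t ∧ a (s * t) ≤ intClosure (b (r * t)) := by
    intro M
    obtain ⟨t, ht1, ht2⟩ := Filter.frequently_atTop.mp hcon M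
    exact ⟨t, ht1, ht2⟩
  have hpig : ∃ e, e < J ∧ ∀ M : ℕ, ∃ t, M ≤ t ∧
      (a (s * t) ≤ intClosure (b (r * t))) ∧ (s * t) % J = e := by
    by_contra hno
    push_neg at hno
    choose! Mf hMf using hno
    set B := (Finset.range J).sup Mf with hBdef
    obtain ⟨t, htB, hcont⟩ := hfreq B
    set e' := (s * t) % J with he'def
    have he' : e' < J := Nat.mod_lt _ hJpos
    have hMfB : Mf e' ≤ B := Finset.le_sup (Finset.mem_range.mpr he')
    exact hMf e' he' t (le_trans hMfB htB) hcont rfl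
  obtain ⟨e, heJ, hQ⟩ := hpig
  obtain ⟨c, hc0, hcmem⟩ : ∃ c : S, c ≠ 0 ∧ ∀ m : ℕ, c * x ^ m ∈ a (e + J * m) := by
    by_cases he : e = 0
    · refine ⟨1, one_ne_zero, fun m => ?_⟩
      rw [one_mul, he, Nat.zero_add]
      exact gf_pow_le ha J m (Ideal.pow_mem_pow hxa m)
    · obtain ⟨c, hcmem, hc0⟩ :=
        Submodule.exists_mem_ne_zero_of_ne_bot (hanz e (Nat.one_le_iff_ne_zero.mpr he))
      refine ⟨c, hc0, fun m => ?_⟩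
      have h1 : x ^ m ∈ a (J * m) := gf_pow_le ha J m (Ideal.pow_mem_pow hxa m)
      exact ha.2 e (J * m) (Ideal.mul_mem_mul hcmem h1)
  obtain ⟨h, hstrip⟩ := ar_strip (b k) hc0
  obtain ⟨t, ht, hcont, hres⟩ := hQ (max (s' * k * h + 1) (J + 1))
  have ht1 : s' * k * h + 1 ≤ t := le_trans (le_max_left _ _) ht
  have ht2 : J + 1 ≤ t := le_trans (le_max_right _ _) ht
  have htpos : 0 < t := by omega
  set m := (s * t) / J with hmdef
  have hJm : e + J * m = s * t := by
    rw [hmdef, ← hres]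
    exact Nat.mod_add_div (s * t) J
  have hm1 : 1 ≤ m := by
    rw [hmdef, Nat.le_div_iff_mul_le hJpos, one_mul]
    calc J ≤ t := by omega
      _ = 1 * t := (one_mul t).symm
      _ ≤ s * t := Nat.mul_le_mul_right _ hs
  have hζ : c * x ^ m ∈ intClosure (b (r * t)) := by
    apply hcont
    rw [← hJm]
    exact hcmem m
  obtain ⟨d, hd⟩ := intClosure_pow_deficit hζ
  set F := V₀ * m + h with hFdef
  set w := F * d + 1 with hwdef
  set g := d + k * w with hgdef
  set E := m * g with hEdef
  have hJmst : J * m ≤ s * t := by omega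
  have hmain : F * k + 1 ≤ r * t := by
    have h1 : s' * (k * V₀ * m) = r' * (J * m) := by
      rw [hJdef, hV₀def, hT₀def]; ring
    have h2 : s' * (k * V₀ * m) ≤ r' * (s * t) := by
      rw [h1]
      exact Nat.mul_le_mul_left _ hJmst
    have h6 : r' * s + 1 ≤ s' * r := by
      have e1 : r' * s = s * r' := Nat.mul_comm _ _
      omega
    have h4 : s' * (F * k) < s' * (r * t) :=
      calc s' * (F * k) = s' * (k * V₀ * m) + s' * k * h := by rw [hFdef]; ring
        _ ≤ r' * (s * t) + s' * k * h := by omega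
        _ < r' * (s * t) + t := by omega
        _ = (r' * s + 1) * t := by ring
        _ ≤ (s' * r) * t := Nat.mul_le_mul_right _ h6
        _ = s' * (r * t) := by ring
    have h5 : F * k < r * t := Nat.lt_of_mul_lt_mul_left h4
    omega
  have hK1 : (c * x ^ m) ^ g ∈ (b (r * t)) ^ (k * w) := by
    rw [hgdef]
    exact hd (k * w)
  have hK2 : (b (r * t)) ^ (k * w) ≤ (b k) ^ (r * t * w) := by
    have hkk : (b (r * t)) ^ k ≤ b k ^ (r * t) := by
      have hh := gf_pow_le hb (r * t) k
      rw [show r * t * k = k * (r * t) by ring] at hh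
      rwa [hst (r * t) (Nat.mul_pos hr htpos)] at hh
    calc (b (r * t)) ^ (k * w) = ((b (r * t)) ^ k) ^ w := by rw [← pow_mul]
      _ ≤ (b k ^ (r * t)) ^ w := ideal_pow_right_mono hkk w
      _ = (b k) ^ (r * t * w) := by rw [← pow_mul]
  have hK3 : c ^ g * x ^ E ∈ (b k) ^ (r * t * w) := by
    have hK := hK2 hK1
    rwa [mul_pow, ← pow_mul] at hK
  have hFg : F * g ≤ r * t * w := by
    have h8 : (F * k + 1) * w ≤ (r * t) * w := Nat.mul_le_mul_right _ hmain
    have h9 : (F * k + 1) * w = F * (k * w) + w := by ring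
    have h10 : F * g = F * d + F * (k * w) := by rw [hgdef]; ring
    have h11 : r * t * w = (r * t) * w := by ring
    omega
  have hhg : h * g ≤ r * t * w := by
    have : h * g ≤ F * g := Nat.mul_le_mul_right _ (by omega)
    omega
  have hVE : V₀ * E + h * g ≤ r * t * w := by
    have : V₀ * E + h * g = F * g := by rw [hEdef, hFdef]; ring
    omega
  have hx4 : x ^ E ∈ (b k) ^ (r * t * w - h * g) := hstrip g (r * t * w) (x ^ E) hhg hK3
  have hx5 : x ^ E ∈ (b k) ^ (V₀ * E) := by
    have hle : (b k) ^ (r * t * w - h * g) ≤ (b k) ^ (V₀ * E) :=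
      Ideal.pow_le_pow_right (by omega)
    exact hle hx4
  have hx6 : x ^ E ∈ (b (r' * T₀)) ^ E := by
    rw [hbV, ← pow_mul]
    exact hx5
  have hEpos : 0 < E := by
    have hwpos : 0 < w := by omega
    have hkw : 0 < k * w := Nat.mul_pos hk hwpos
    have hgpos : 0 < g := by omega
    exact Nat.mul_pos hm1 hgpos
  exact hx (mem_intClosure_of_pow_mem hEpos hx6)
end

section
/- Let 𝔞_• and 𝔟_• be graded families of ideals in a Noetherian commutative ring S, and suppose ℛ^{[k]}(𝔟_•) is a standard graded S-algebra. Then, with 𝔟_k^• = {𝔟_k^i}_{i≥1}, one has ρ(𝔞_•, 𝔟_k^•) ≤ k·ρ(𝔞_•, 𝔟_•) and ρ(𝔞_•, overline{𝔟_k^•}) ≤ k·ρ(𝔞_•, 𝔟̄_•), where overline{𝔟_k^•} = {overline{𝔟_k^i}}_{i≥1}. -/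
open Filter Polynomial
open scoped ENNReal NNReal

set_option synthInstance.maxHeartbeats 1000000
set_option maxHeartbeats 1000000

universe u

lemma aux_resurgence_le {S : Type u} [CommRing S]
    (a c d : ℕ → Ideal S) (k : ℕ) (hk : 0 < k)
    (h : ∀ r : ℕ, 0 < r → c r = d (k * r)) :
    resurgence a c ≤ ((k : ℝ) : EReal) * resurgence a d := by
  apply sSup_le
  rintro x ⟨s, r, hs, hr, hne, rfl⟩
  have hmem : (((s : ℝ) / ((k * r : ℕ) : ℝ) : ℝ) : EReal) ∈
      {x : EReal | ∃ s' r' : ℕ, 0 < s' ∧ 0 < r' ∧ ¬ a s' ≤ d r' ∧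
        x = (((s' : ℝ) / (r' : ℝ) : ℝ) : EReal)} := by
    exact ⟨s, k * r, hs, Nat.mul_pos hk hr, by rwa [← h r hr], rfl⟩
  have hle := le_sSup hmem
  have hkr : ((k * r : ℕ) : ℝ) = (k : ℝ) * (r : ℝ) := by push_cast; ring
  have heq : ((s : ℝ) / (r : ℝ) : ℝ) = (k : ℝ) * ((s : ℝ) / ((k * r : ℕ) : ℝ)) := by
    rw [hkr]
    field_simp
  rw [heq, EReal.coe_mul]
  exact mul_le_mul_of_nonneg_left hle (by exact_mod_cast (Nat.cast_nonneg k : (0:ℝ) ≤ k))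

/-- **Lemma.** Let `a`, `b` be graded families of ideals in a Noetherian ring `S` with
`ℛ^{[k]}(b)` a standard graded `S`-algebra. Then `ρ(a, (b k)^•) ≤ k·ρ(a, b)` and
`ρ(a, overline{(b k)^•}) ≤ k·ρ(a, b̄)`. -/
theorem statement12 {S : Type u} [CommRing S] [IsNoetherianRing S]
    (a b : ℕ → Ideal S) (ha : GradedFamily a) (hb : GradedFamily b)
    (k : ℕ) (hk : 0 < k) (hst : StdVeronese b k) :
    resurgence a (fun i => b k ^ i) ≤ ((k : ℝ) : EReal) * resurgence a b ∧
      resurgence a (fun i => intClosure (b k ^ i)) ≤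
        ((k : ℝ) : EReal) * resurgence a (fun i => intClosure (b i)) := by
  constructor
  · exact aux_resurgence_le a (fun i => b k ^ i) b k hk
      (fun r hr => ((hst r hr).symm : b k ^ r = b (k * r)))
  · exact aux_resurgence_le a (fun i => intClosure (b k ^ i)) (fun i => intClosure (b i)) k hk
      (fun r hr => by simp only [hst r hr])
end

section
/- Let S be a Noetherian domain and let 𝔞_• and 𝔟_• be graded families of nonzero ideals in S, and suppose ℛ^{[k]}(𝔟_•) is a standard graded S-algebra. Then, with 𝔟_k^• = {𝔟_k^i}_{i≥1}, one has ρ̂(𝔞_•, 𝔟_k^•) = k·ρ̂(𝔞_•, 𝔟_•) and ρ̂(𝔞_•, overline{𝔟_k^•}) = k·ρ̂(𝔞_•, 𝔟̄_•), where overline{𝔟_k^•} = {overline{𝔟_k^i}}_{i≥1}. -/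
open Filter Polynomial
open scoped ENNReal NNReal

set_option synthInstance.maxHeartbeats 1000000
set_option maxHeartbeats 1000000

universe u

lemma asympResurgence_veronese_key {S : Type u} [CommRing S] (a c b' : ℕ → Ideal S)
    (k : ℕ) (hk : 0 < k) (hc : ∀ i : ℕ, 1 ≤ i → c i = b' (k * i)) :
    asympResurgence a c = ((k : ℝ) : EReal) * asympResurgence a b' := by
  have hkR : (0:ℝ) < (k:ℝ) := by exact_mod_cast hk
  have hkE : (0:EReal) < ((k:ℝ):EReal) := by exact_mod_cast hkR
  have hkT : ((k:ℝ):EReal) ≠ ⊤ := EReal.coe_ne_top _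
  unfold asympResurgence
  apply le_antisymm
  · apply sSup_le
    rintro x ⟨s, r, hs, hr, hev, rfl⟩
    have hyB : (((s:ℝ) / ((k*r : ℕ):ℝ) : ℝ) : EReal) ∈
        {x : EReal | ∃ s r : ℕ, 0 < s ∧ 0 < r ∧
          (∀ᶠ t : ℕ in atTop, ¬ a (s * t) ≤ b' (r * t)) ∧
          x = (((s : ℝ) / (r : ℝ) : ℝ) : EReal)} := by
      refine ⟨s, k*r, hs, Nat.mul_pos hk hr, ?_, rfl⟩
      obtain ⟨N, hN⟩ := eventually_atTop.mp hev
      refine eventually_atTop.mpr ⟨max N 1, fun t ht => ?_⟩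
      have ht1 : 1 ≤ t := le_trans (le_max_right N 1) ht
      have := hN t (le_trans (le_max_left N 1) ht)
      rwa [hc (r*t) (Nat.one_le_iff_ne_zero.mpr (Nat.mul_ne_zero hr.ne' (by omega))),
        ← mul_assoc] at this
    have hle := le_sSup hyB
    calc (((s:ℝ) / (r:ℝ) : ℝ) : EReal)
        = ((k:ℝ):EReal) * (((s:ℝ) / ((k*r : ℕ):ℝ) : ℝ) : EReal) := by
          rw [← EReal.coe_mul]; congr 1; push_cast; field_simp
      _ ≤ _ := mul_le_mul_of_nonneg_left hle hkE.le
  · have h2 : sSup {x : EReal | ∃ s r : ℕ, 0 < s ∧ 0 < r ∧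
          (∀ᶠ t : ℕ in atTop, ¬ a (s * t) ≤ b' (r * t)) ∧
          x = (((s : ℝ) / (r : ℝ) : ℝ) : EReal)} ≤
        sSup {x : EReal | ∃ s r : ℕ, 0 < s ∧ 0 < r ∧
          (∀ᶠ t : ℕ in atTop, ¬ a (s * t) ≤ c (r * t)) ∧
          x = (((s : ℝ) / (r : ℝ) : ℝ) : EReal)} / ((k:ℝ):EReal) := by
      apply sSup_le
      rintro y ⟨s, r, hs, hr, hev, rfl⟩
      rw [EReal.le_div_iff_mul_le hkE hkT]
      have hxA : (((s:ℝ) / (r:ℝ) : ℝ) : EReal) * ((k:ℝ):EReal) =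
          ((((k*s : ℕ):ℝ) / (r:ℝ) : ℝ) : EReal) := by
        rw [← EReal.coe_mul]; congr 1; push_cast; field_simp
      rw [hxA]
      apply le_sSup
      refine ⟨k*s, r, Nat.mul_pos hk hs, hr, ?_, rfl⟩
      obtain ⟨N, hN⟩ := eventually_atTop.mp hev
      refine eventually_atTop.mpr ⟨max N 1, fun t ht => ?_⟩
      have ht1 : 1 ≤ t := le_trans (le_max_right N 1) ht
      have hNt : N ≤ k * t := le_trans (le_trans (le_max_left N 1) ht) (Nat.le_mul_of_pos_left t hk)
      have := hN (k*t) hNt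
      rw [hc (r*t) (Nat.one_le_iff_ne_zero.mpr (Nat.mul_ne_zero hr.ne' (by omega)))]
      intro hcon
      apply this
      have e1 : s * (k * t) = k * s * t := by ring
      have e2 : r * (k * t) = k * (r * t) := by ring
      rwa [e1, e2]
    calc ((k:ℝ):EReal) * _ ≤ ((k:ℝ):EReal) * (_ / ((k:ℝ):EReal)) :=
          mul_le_mul_of_nonneg_left h2 hkE.le
      _ = _ := EReal.mul_div_cancel (EReal.coe_ne_bot _) hkT (by exact_mod_cast hkR.ne')

/-- **Lemma.** Let `S` be a Noetherian domain and `a`, `b` graded families of nonzero ideals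
with `ℛ^{[k]}(b)` a standard graded `S`-algebra. Then `ρ̂(a, (b k)^•) = k·ρ̂(a, b)` and
`ρ̂(a, overline{(b k)^•}) = k·ρ̂(a, b̄)`. -/
theorem statement13 {S : Type u} [CommRing S] [IsDomain S] [IsNoetherianRing S]
    (a b : ℕ → Ideal S) (ha : GradedFamily a) (hb : GradedFamily b)
    (hanz : ∀ i : ℕ, 1 ≤ i → a i ≠ ⊥) (hbnz : ∀ i : ℕ, 1 ≤ i → b i ≠ ⊥)
    (k : ℕ) (hk : 0 < k) (hst : StdVeronese b k) :
    asympResurgence a (fun i => b k ^ i) = ((k : ℝ) : EReal) * asympResurgence a b ∧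
      asympResurgence a (fun i => intClosure (b k ^ i)) =
        ((k : ℝ) : EReal) * asympResurgence a (fun i => intClosure (b i)) := by
  constructor
  · exact asympResurgence_veronese_key a _ b k hk (fun i hi => (hst i hi).symm)
  · exact asympResurgence_veronese_key a _ _ k hk (fun i hi => by rw [hst i hi])
end

section
/- Let 𝔞_•, 𝔟_•, and 𝔟'_• be graded families of ideals in a Noetherian commutative ring S. Suppose that 𝔟_i ⊆ 𝔟'_i for all i ≥ 1 and that there exists a positive integer k with 𝔟'_{i+k} ⊆ 𝔟_i for all i ∈ ℕ. Then ρ^{lim}(𝔞_•, 𝔟'_•) = ρ^{lim}(𝔞_•, 𝔟_•). -/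
open Filter Polynomial
open scoped ENNReal NNReal

set_option synthInstance.maxHeartbeats 1000000
set_option maxHeartbeats 1000000

universe u

section AuxLemmas

variable {S : Type u} [CommRing S]

lemma aux_betaIdx_spec {a b : ℕ → Ideal S} {s d : ℕ}
    (h : betaIdx a b s = (d : ℕ∞)) : 0 < d ∧ ¬ a s ≤ b d := by
  set T : Set ℕ∞ := {x : ℕ∞ | ∃ m : ℕ, 0 < m ∧ ¬ a s ≤ b m ∧ x = (m : ℕ∞)} with hT
  have hne : T.Nonempty := by
    rcases T.eq_empty_or_nonempty with he | hne
    · exfalso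
      have h2 : betaIdx a b s = ⊤ := by rw [betaIdx, ← hT, he, sInf_empty]
      rw [h] at h2
      exact (WithTop.natCast_ne_top d) h2
    · exact hne
  obtain ⟨m, hm, hnle, heq⟩ := csInf_mem hne
  have h2 : (d : ℕ∞) = (m : ℕ∞) := h ▸ heq
  have h3 : d = m := by exact_mod_cast h2
  subst h3
  exact ⟨hm, hnle⟩

lemma aux_betaIdx_le {a b : ℕ → Ideal S} {s m : ℕ} (hm : 0 < m) (h : ¬ a s ≤ b m) :
    betaIdx a b s ≤ (m : ℕ∞) :=
  sInf_le ⟨m, hm, h, rfl⟩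

lemma aux_betaIdx_mono {a b b' : ℕ → Ideal S} (hle : ∀ i : ℕ, 1 ≤ i → b i ≤ b' i) (s : ℕ) :
    betaIdx a b s ≤ betaIdx a b' s := by
  apply sInf_le_sInf
  rintro x ⟨m, hm, hnle, rfl⟩
  exact ⟨m, hm, fun hh => hnle (hh.trans (hle m hm)), rfl⟩

end AuxLemmas

/-- **Theorem.** Let `a`, `b`, `b'` be graded families of ideals in a Noetherian ring `S`
with `b ≤ b'` and `b' (i + k) ⊆ b i` for all `i ≥ 1`, for some positive integer `k`. Then
`ρ^lim(a, b') = ρ^lim(a, b)`. -/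
theorem statement16 {S : Type u} [CommRing S] [IsNoetherianRing S]
    (a b b' : ℕ → Ideal S) (ha : GradedFamily a) (hb : GradedFamily b)
    (hb' : GradedFamily b')
    (hle : ∀ i : ℕ, 1 ≤ i → b i ≤ b' i)
    (k : ℕ) (hk : 0 < k) (hcon : ∀ i : ℕ, 1 ≤ i → b' (i + k) ≤ b i) :
    rhoLim a b' = rhoLim a b := by
  have key : ∀ s d : ℕ, betaIdx a b s = (d : ℕ∞) →
      ∃ d' : ℕ, d ≤ d' ∧ d' ≤ d + k ∧ betaIdx a b' s = (d' : ℕ∞) := by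
    intro s d hd
    obtain ⟨hd0, hnle⟩ := aux_betaIdx_spec hd
    have hnle' : ¬ a s ≤ b' (d + k) := fun hh => hnle (hh.trans (hcon d hd0))
    have hub : betaIdx a b' s ≤ ((d + k : ℕ) : ℕ∞) := aux_betaIdx_le (by omega) hnle'
    obtain ⟨d', hd'⟩ := WithTop.ne_top_iff_exists.mp
      ((hub.trans_lt (WithTop.coe_lt_top _)).ne)
    have hd' : betaIdx a b' s = (d' : ℕ∞) := hd'.symm
    have hlb : (d : ℕ∞) ≤ (d' : ℕ∞) := by
      rw [← hd, ← hd']; exact aux_betaIdx_mono hle s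
    have hub2 : (d' : ℕ∞) ≤ ((d + k : ℕ) : ℕ∞) := hd' ▸ hub
    exact ⟨d', by exact_mod_cast hlb, by exact_mod_cast hub2, hd'⟩
  have dir1 : rhoLim a b' ≤ rhoLim a b := by
    simp only [rhoLim]
    refine iInf_mono fun n => ?_
    simp only [rhoN]
    refine sSup_le ?_
    rintro x ⟨s, d, hns, hs, hβ, rfl⟩
    have hmono := aux_betaIdx_mono (a := a) hle s
    rw [hβ] at hmono
    obtain ⟨d0, hd0⟩ := WithTop.ne_top_iff_exists.mp
      ((hmono.trans_lt (WithTop.coe_lt_top _)).ne)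
    have hd0 : betaIdx a b s = (d0 : ℕ∞) := hd0.symm
    have hd00 : 0 < d0 := (aux_betaIdx_spec hd0).1
    have hled : d0 ≤ d := by
      rw [hd0] at hmono; exact_mod_cast hmono
    refine le_trans ?_ (le_sSup ⟨s, d0, hns, hs, hd0, rfl⟩)
    apply EReal.coe_le_coe_iff.mpr
    have h1 : (0:ℝ) ≤ (s:ℝ) := by positivity
    have h2 : (0:ℝ) < (d0:ℝ) := by exact_mod_cast hd00
    have h3 : (d0:ℝ) ≤ (d:ℝ) := by exact_mod_cast hled
    gcongr
  have dir2 : rhoLim a b ≤ rhoLim a b' := by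
    conv_rhs => rw [rhoLim]
    refine le_iInf fun n => ?_
    by_cases hT : rhoN a b' n = ⊤
    · rw [hT]; exact le_top
    by_cases hB : rhoN a b' n = ⊥
    · have hempty : rhoN a b n = ⊥ := by
        rw [rhoN]
        rw [show {x : EReal | ∃ s d : ℕ, n ≤ s ∧ 0 < s ∧ betaIdx a b s = (d : ℕ∞) ∧
            x = (((s : ℝ) / (d : ℝ) : ℝ) : EReal)} = ∅ from ?_, sSup_empty]
        ext x
        simp only [Set.mem_setOf_eq, Set.mem_empty_iff_false, iff_false, not_exists]
        rintro s d ⟨hns, hs, hβ, rfl⟩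
        obtain ⟨d', _, _, hβ'⟩ := key s d hβ
        have hmem : ((((s : ℝ) / (d' : ℝ) : ℝ)) : EReal) ≤ rhoN a b' n := by
          rw [rhoN]
          exact le_sSup ⟨s, d', hns, hs, hβ', rfl⟩
        rw [hB] at hmem
        exact absurd (le_bot_iff.mp hmem) (EReal.coe_ne_bot _)
      calc rhoLim a b ≤ rhoN a b n := iInf_le _ n
        _ = ⊥ := hempty
        _ ≤ rhoN a b' n := bot_le
    obtain ⟨rr, hrr⟩ : ∃ rr : ℝ, rhoN a b' n = (rr : EReal) := by
      lift rhoN a b' n to ℝ using ⟨hT, hB⟩ with rr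
      exact ⟨rr, rfl⟩
    rw [hrr]
    by_contra hlt
    push_neg at hlt
    obtain ⟨x, hx1, hx2⟩ := EReal.lt_iff_exists_real_btwn.mp hlt
    have hrx : rr < x := by exact_mod_cast hx1
    have hε : (0:ℝ) < x - rr := by linarith
    set ε : ℝ := x - rr with hεdef
    have hmain : rhoLim a b ≤ (x : EReal) := by
      set C : ℝ := rr * k * (rr + ε) / ε with hC
      set N : ℕ := max n (⌈C⌉₊ + 1) with hN
      refine le_trans (iInf_le _ N) ?_
      rw [rhoN]
      refine sSup_le ?_
      rintro y ⟨s, d, hNs, hs, hβ, rfl⟩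
      obtain ⟨d', hdd', hd'k, hβ'⟩ := key s d hβ
      have hd0 : 0 < d := (aux_betaIdx_spec hβ).1
      have hd'0 : 0 < d' := lt_of_lt_of_le hd0 hdd'
      have hns : n ≤ s := le_trans (le_max_left _ _) hNs
      have hle2 : ((s : ℝ) / (d' : ℝ)) ≤ rr := by
        have hmem : ((((s : ℝ) / (d' : ℝ) : ℝ)) : EReal) ≤ rhoN a b' n := by
          rw [rhoN]
          exact le_sSup ⟨s, d', hns, hs, hβ', rfl⟩
        rw [hrr] at hmem
        exact_mod_cast hmem
      have hs' : (0:ℝ) < (s:ℝ) := by exact_mod_cast hs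
      have hd'R : (0:ℝ) < (d':ℝ) := by exact_mod_cast hd'0
      have hdR : (0:ℝ) < (d:ℝ) := by exact_mod_cast hd0
      have hrr0 : 0 < rr := lt_of_lt_of_le (div_pos hs' hd'R) hle2
      have h1 : (s:ℝ) ≤ rr * (d':ℝ) := by
        rw [div_le_iff₀ hd'R] at hle2; linarith
      have hcast : (d':ℝ) ≤ (d:ℝ) + (k:ℝ) := by exact_mod_cast hd'k
      have h2 : (s:ℝ) ≤ rr * (d:ℝ) + rr * (k:ℝ) := by nlinarith
      have hNC : C ≤ (N:ℝ) := by
        calc C ≤ (⌈C⌉₊ : ℝ) := Nat.le_ceil C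
          _ ≤ ((⌈C⌉₊ + 1 : ℕ) : ℝ) := by push_cast; linarith
          _ ≤ (N:ℝ) := by exact_mod_cast le_max_right n (⌈C⌉₊ + 1)
      have hNsR : (N:ℝ) ≤ (s:ℝ) := by exact_mod_cast hNs
      have hCs : C ≤ (s:ℝ) := hNC.trans hNsR
      have hεs : rr * (k:ℝ) * (rr + ε) ≤ ε * (s:ℝ) := by
        rw [hC, div_le_iff₀ hε] at hCs
        linarith
      have hεd : rr * (k:ℝ) ≤ ε * (d:ℝ) := by
        nlinarith [mul_le_mul_of_nonneg_left h2 hε.le, hεs, hrr0]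
      apply EReal.coe_le_coe_iff.mpr
      rw [div_le_iff₀ hdR]
      have hxε : x = rr + ε := by rw [hεdef]; ring
      rw [hxε]
      nlinarith [h2, hεd]
    exact absurd hx2 (not_lt.mpr hmain)
  exact le_antisymm dir1 dir2
end

section
/- Let 𝔞_• and 𝔟_• be filtrations of ideals in a Noetherian commutative ring S. Then the topology τ_𝔞 is linearly finer than the topology τ_𝔟 if and only if ρ(𝔞_•, 𝔟_•) < ∞. -/
open Filter Polynomial
open scoped ENNReal NNReal

set_option synthInstance.maxHeartbeats 1000000
set_option maxHeartbeats 1000000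

universe u

/-- **Theorem.** Let `a`, `b` be filtrations of ideals in a Noetherian ring `S`. Then the
topology defined by `a` is linearly finer than the topology defined by `b` (i.e. there is a
linear function `f(i) = c*i + d` with nonnegative integer coefficients such that
`a (f i) ⊆ b i` for all `i ≥ 1`) if and only if `ρ(a, b) < ∞`. -/
theorem statement18 {S : Type u} [CommRing S] [IsNoetherianRing S]
    (a b : ℕ → Ideal S) (ha : IdealFiltration a) (hb : IdealFiltration b) :
    (∃ c d : ℕ, ∀ i : ℕ, 1 ≤ i → a (c * i + d) ≤ b i) ↔ resurgence a b < ⊤ := by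
  obtain ⟨-, ha2⟩ := ha
  have haA : Antitone a := antitone_nat_of_succ_le ha2
  constructor
  · rintro ⟨c, d, h⟩
    refine lt_of_le_of_lt (sSup_le ?_) (EReal.coe_lt_top ((c + d : ℕ) : ℝ))
    rintro x ⟨s, r, hs, hr, hab, rfl⟩
    have hslt : s < c * r + d := by
      by_contra hge
      push_neg at hge
      exact hab (le_trans (haA hge) (h r hr))
    have hR : (0 : ℝ) < (r : ℝ) := by exact_mod_cast hr
    have hle : (s : ℝ) / (r : ℝ) ≤ ((c + d : ℕ) : ℝ) := by
      rw [div_le_iff₀ hR]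
      have h1 : (s : ℝ) ≤ c * r + d := by
        have := hslt.le
        exact_mod_cast this
      have h2 : (c : ℝ) * r + d ≤ ((c + d : ℕ) : ℝ) * r := by
        have hr1 : (1 : ℝ) ≤ (r : ℝ) := by exact_mod_cast hr
        push_cast
        rw [add_mul]
        have hd : (d : ℝ) ≤ (d : ℝ) * r := le_mul_of_one_le_right (by positivity) hr1
        linarith only [hd]
      linarith only [h1, h2]
    exact_mod_cast EReal.coe_le_coe_iff.mpr hle
  · intro h
    obtain ⟨M, hM1, -⟩ := EReal.exists_between_coe_real h
    refine ⟨⌈M⌉₊ + 1, 0, fun i hi => ?_⟩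
    by_contra hab
    have hi0 : (0 : ℝ) < (i : ℝ) := by exact_mod_cast hi
    have hmem : ((((((⌈M⌉₊ + 1) * i : ℕ) : ℝ) / ((i : ℕ) : ℝ) : ℝ)) : EReal) ∈
        {x : EReal | ∃ s r : ℕ, 0 < s ∧ 0 < r ∧ ¬ a s ≤ b r ∧
          x = (((s : ℝ) / (r : ℝ) : ℝ) : EReal)} := by
      refine ⟨(⌈M⌉₊ + 1) * i, i, by positivity, hi, ?_, rfl⟩
      rwa [add_zero] at hab
    have hle := le_sSup hmem
    have hval : ((((⌈M⌉₊ + 1) * i : ℕ) : ℝ) / ((i : ℕ) : ℝ) : ℝ) = ((⌈M⌉₊ : ℝ) + 1) := by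
      push_cast
      field_simp
    rw [hval] at hle
    have : ((((⌈M⌉₊ : ℝ) + 1) : ℝ) : EReal) < ((M : ℝ) : EReal) := lt_of_le_of_lt hle hM1
    have h2 : ((⌈M⌉₊ : ℝ) + 1) < M := by exact_mod_cast this
    have h3 := Nat.le_ceil M
    linarith only [h2, h3]
end
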